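/- arXiv:1409.8604 — 4 statements merged into one kernel-verified Lean document; each statement's English description precedes it below -/
import Mathlib

section
/- Let M be a free algebra on an uncountable basis I in a variety V, and suppose M is saturated in its own cardinality. If a ∈ M is basic (i.e., a extends to a basis of M), then a realizes the type p₀ = tp(e/∅) of any basis element e ∈ I; conversely every element of M realizing p₀ is basic. -/
open FirstOrder Language Cardinal Set

universe u v w

namespace Paper

variable {L : FirstOrder.Language.{u, v}}

/-- `a` and `b` (as `n`-tuples) satisfy the same formulas with parameters from `A`. -/
def SameType {M : Type w} [L.Structure M] (A : Set M) {n : ℕ} (a b : Fin n → M) : Prop :=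
  ∀ φ : L.Formula (↥A ⊕ Fin n),
    φ.Realize (Sum.elim (fun x => (x : M)) a) ↔ φ.Realize (Sum.elim (fun x => (x : M)) b)

/-- `a` and `b` satisfy the same formulas over the empty set. -/
def SameType₀ {M : Type w} [L.Structure M] {n : ℕ} (a b : Fin n → M) : Prop :=
  ∀ φ : L.Formula (Fin n), φ.Realize a ↔ φ.Realize b

/-- `M` is `κ`-saturated: every finitely satisfiable (in `M`) collection of formulas in one
variable over a parameter set of size `< κ` is realized in `M`. -/
def IsSat (M : Type w) [L.Structure M] (κ : Cardinal.{w}) : Prop :=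
  ∀ A : Set M, #A < κ →
    ∀ p : Set (L.Formula (↥A ⊕ Fin 1)),
      (∀ S : Finset (L.Formula (↥A ⊕ Fin 1)), ↑S ⊆ p →
        ∃ a : Fin 1 → M, ∀ φ ∈ S, φ.Realize (Sum.elim (fun x => (x : M)) a)) →
      ∃ a : Fin 1 → M, ∀ φ ∈ p, φ.Realize (Sum.elim (fun x => (x : M)) a)

/-- `b` is algebraic over `A` in `M`. -/
def InAcl {M : Type w} [L.Structure M] (A : Set M) (b : M) : Prop :=
  ∃ φ : L.Formula (↥A ⊕ Fin 1),
    φ.Realize (Sum.elim (fun x => (x : M)) (fun _ => b)) ∧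
    {x : M | φ.Realize (Sum.elim (fun x => (x : M)) (fun _ => x))}.Finite

/-- A set `I` of `k`-tuples is an indiscernible set: any two injective enumerations
of `n` elements of `I` satisfy the same formulas over `∅`. -/
def IsIndiscSet {M : Type w} [L.Structure M] {k : ℕ} (I : Set (Fin k → M)) : Prop :=
  ∀ (n : ℕ) (a b : Fin n → (Fin k → M)), Function.Injective a → Function.Injective b →
    (∀ i, a i ∈ I) → (∀ i, b i ∈ I) →
    ∀ φ : L.Formula (Fin n × Fin k),
      (φ.Realize fun p => a p.1 p.2) ↔ (φ.Realize fun p => b p.1 p.2)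

/-- The set of all coordinates of the tuples in `I`. -/
def coords {M : Type w} {k : ℕ} (I : Set (Fin k → M)) : Set M :=
  ⋃ e ∈ I, Set.range e

/-- A theory is almost indiscernible if it has a saturated model of cardinality `ℵ₁` which is
contained in the algebraic closure of an indiscernible set of finite tuples of cardinality `ℵ₁`. -/
def AlmostIndiscernible (T : L.Theory) : Prop :=
  ∃ (M : Type (max u v)) (_ : L.Structure M), M ⊨ T ∧ #M = ℵ₁ ∧ IsSat (L := L) M ℵ₁ ∧
    ∃ (k : ℕ) (I : Set (Fin k → M)), IsIndiscSet (L := L) I ∧ #I = ℵ₁ ∧ ∀ b : M, InAcl (L := L) (coords I) b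

/-- A complete type over `A` in one variable, identified with a maximal finitely satisfiable
set of formulas over `A`. -/
def IsCompleteTypeOver (M : Type w) [L.Structure M] (A : Set M)
    (p : Set (L.Formula (↥A ⊕ Fin 1))) : Prop :=
  (∀ S : Finset (L.Formula (↥A ⊕ Fin 1)), ↑S ⊆ p →
    ∃ a : Fin 1 → M, ∀ φ ∈ S, φ.Realize (Sum.elim (fun x => (x : M)) a)) ∧
  (∀ φ : L.Formula (↥A ⊕ Fin 1), φ ∈ p ∨ φ.not ∈ p)

/-- `T` is `ω`-stable: over every countable parameter set in a model of `T` there are only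
countably many complete types. -/
def IsOmegaStable (T : L.Theory) : Prop :=
  ∀ (M : Type (max u v)) (_ : L.Structure M), M ⊨ T →
    ∀ A : Set M, A.Countable → {p | IsCompleteTypeOver (L := L) M A p}.Countable

section Rank

variable {M : Type w} [L.Structure M]

/-- Realization of a formula with parameters from all of `M`. -/
def RealP {n : ℕ} (φ : L.Formula (M ⊕ Fin n)) (a : Fin n → M) : Prop :=
  φ.Realize (Sum.elim id a)

/-- Morley rank (computed in `M`) of a definable set is at least `α`. -/
def MRGe {n : ℕ} (φ : L.Formula (M ⊕ Fin n)) (α : Ordinal.{0}) : Prop :=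
  (∃ a, RealP φ a) ∧ ∀ β < α, ∃ ψ : ℕ → L.Formula (M ⊕ Fin n),
    (∀ i a, RealP (ψ i) a → RealP φ a) ∧
    (∀ i j, i ≠ j → ∀ a, ¬(RealP (ψ i) a ∧ RealP (ψ j) a)) ∧
    ∀ i, MRGe (ψ i) β
termination_by α
decreasing_by exact ‹_ < α›

/-- Morley rank (computed in `M`) is exactly `α`. -/
def MREq {n : ℕ} (φ : L.Formula (M ⊕ Fin n)) (α : Ordinal.{0}) : Prop :=
  MRGe φ α ∧ ¬ MRGe φ (α + 1)

/-- Every formula over `A` satisfied by `a` has Morley rank at least `α`. -/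
def TpRkGe (A : Set M) {n : ℕ} (a : Fin n → M) (α : Ordinal.{0}) : Prop :=
  ∀ φ : L.Formula (↥A ⊕ Fin n),
    φ.Realize (Sum.elim (fun x => (x : M)) a) →
    MRGe (L := L) (φ.relabel (Sum.map (fun x : ↥A => (x : M)) id)) α

/-- `a` is (forking-)independent from `B` over `A`: the Morley rank of its type does not
drop when the parameters are extended from `A` to `A ∪ B`. -/
def Indep (A : Set M) {n : ℕ} (a : Fin n → M) (B : Set M) : Prop :=
  ∀ α : Ordinal.{0}, TpRkGe (L := L) (A ∪ B) a α ↔ TpRkGe (L := L) A a α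

/-- An independent family of realizations: each member is independent from all the others. -/
def IndepFamily (A : Set M) {n : ℕ} {ι : Type*} (J : ι → (Fin n → M)) : Prop :=
  ∀ i : ι, Indep (L := L) A (J i) (⋃ j ∈ {j | j ≠ i}, Set.range (J j))

/-- `tp(a/A)` is stationary (w.r.t. parameter sets of size `< κ`). -/
def Stationary (κ : Cardinal.{w}) (A : Set M) {n : ℕ} (a : Fin n → M) : Prop :=
  ∀ B : Set M, A ⊆ B → #B < κ → ∀ a' a'' : Fin n → M,
    SameType (L := L) A a' a → SameType (L := L) A a'' a → Indep (L := L) A a' B → Indep (L := L) A a'' B → SameType (L := L) B a' a''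

/-- `tp(a/A)` and `tp(b/B)` are nonorthogonal (w.r.t. parameter sets of size `< κ`). -/
def Nonorthogonal (κ : Cardinal.{w}) (A : Set M) {n : ℕ} (a : Fin n → M)
    (B : Set M) {m : ℕ} (b : Fin m → M) : Prop :=
  ∃ C : Set M, A ∪ B ⊆ C ∧ #C < κ ∧ ∃ (a' : Fin n → M) (b' : Fin m → M),
    SameType (L := L) A a' a ∧ Indep (L := L) A a' C ∧ SameType (L := L) B b' b ∧
    Indep (L := L) B b' C ∧ ¬ Indep (L := L) C a' (Set.range b')

/-- `tp(a/A)` is regular: stationary, nonalgebraic, and orthogonal to all of its forking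
extensions. -/
def Regular (κ : Cardinal.{w}) (A : Set M) {n : ℕ} (a : Fin n → M) : Prop :=
  Stationary (L := L) κ A a ∧ (∃ i, ¬ InAcl (L := L) A (a i)) ∧
  ∀ B : Set M, A ⊆ B → #B < κ → ∀ a' : Fin n → M,
    SameType (L := L) A a' a → ¬ Indep (L := L) A a' B → ¬ Nonorthogonal (L := L) κ A a B a'

/-- U-rank of `tp(a/A)` is at least `α`. -/
def URkGe (κ : Cardinal.{w}) (A : Set M) {n : ℕ} (a : Fin n → M) (α : Ordinal.{0}) : Prop :=
  ∀ β < α, ∃ (B : Set M) (a' : Fin n → M), A ⊆ B ∧ #B < κ ∧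
    SameType (L := L) A a' a ∧ ¬ Indep (L := L) A a' B ∧ URkGe κ B a' β
termination_by α
decreasing_by exact ‹_ < α›

end Rank

section Algebra

/-- The theory `T` is equational: every axiom is a universally quantified equation
between terms. -/
def IsEquational (T : L.Theory) : Prop :=
  ∀ φ ∈ T, ∃ (n : ℕ) (t₁ t₂ : L.Term (Empty ⊕ Fin n)),
    φ = BoundedFormula.alls (t₁.bdEqual t₂)

/-- `A` is free on `X ⊆ A` over the class of models of `T`: `A ⊨ T` and every map from `X`
into a model of `T` extends uniquely to a homomorphism. -/
def IsFreeOn (T : L.Theory) (A : Type w) [L.Structure A] (X : Set A) : Prop :=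
  A ⊨ T ∧ ∀ (B : Type w) (_ : L.Structure B), B ⊨ T →
    ∀ f : X → B, ∃! h : A →[L] B, ∀ x : X, h x = f x

/-- An element of a free algebra is basic if it belongs to some basis. -/
def IsBasic (T : L.Theory) {M : Type w} [L.Structure M] (a : M) : Prop :=
  ∃ X : Set M, a ∈ X ∧ IsFreeOn T M X

/-- A subset of a free algebra is basic if it is contained in some basis. -/
def IsBasicSet (T : L.Theory) {M : Type w} [L.Structure M] (A : Set M) : Prop :=
  ∃ X : Set M, A ⊆ X ∧ IsFreeOn T M X

end Algebra

/-- Tarski–Vaught style: `S` is the underlying set of an elementary substructure. -/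
def IsElemSubset {M : Type w} [L.Structure M] (S : Set M) : Prop :=
  S.Nonempty ∧ ∀ (n : ℕ) (φ : L.Formula (Fin (n + 1))) (a : Fin n → M),
    (∀ i, a i ∈ S) → (∃ x : M, φ.Realize (Fin.snoc a x)) →
    ∃ x ∈ S, φ.Realize (Fin.snoc a x)

/-- Every type over a parameter subset of `S` of size `< κ` that is finitely satisfiable in `M`
is realized inside `S`. -/
def SatInside {M : Type w} [L.Structure M] (S : Set M) (κ : Cardinal.{w}) : Prop :=
  ∀ A : Set M, A ⊆ S → #A < κ →
    ∀ p : Set (L.Formula (↥A ⊕ Fin 1)),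
      (∀ Sf : Finset (L.Formula (↥A ⊕ Fin 1)), ↑Sf ⊆ p →
        ∃ a : Fin 1 → M, ∀ φ ∈ Sf, φ.Realize (Sum.elim (fun x => (x : M)) a)) →
      ∃ a : Fin 1 → M, a 0 ∈ S ∧ ∀ φ ∈ p, φ.Realize (Sum.elim (fun x => (x : M)) a)

end Paper

namespace Stmt4Aux

variable {L : FirstOrder.Language.{u, v}} {M : Type w} [L.Structure M]

/-- `P` is the graph of a partial elementary map. -/
def PEG (L : FirstOrder.Language.{u, v}) (M : Type w) [L.Structure M] (P : Set (M × M)) : Prop :=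
  ∀ (n : ℕ) (v : Fin n → M × M), (∀ i, v i ∈ P) → ∀ φ : L.Formula (Fin n),
    (φ.Realize fun i => (v i).1) ↔ (φ.Realize fun i => (v i).2)

theorem peg_mono {P Q : Set (M × M)} (h : PEG L M P) (hQ : Q ⊆ P) : PEG L M Q :=
  fun n v hv φ => h n v (fun i => hQ (hv i)) φ

theorem peg_arb {P : Set (M × M)} (h : PEG L M P) {α : Type u'} (v : α → M × M)
    (hv : ∀ i, v i ∈ P) (φ : L.Formula α) :
    (φ.Realize fun i => (v i).1) ↔ (φ.Realize fun i => (v i).2) := by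
  classical
  have hsub : ↑φ.freeVarFinset ⊆ (↑φ.freeVarFinset : Set α) := subset_rfl
  set ψ : L.BoundedFormula (↑φ.freeVarFinset : Set α) 0 :=
    φ.restrictFreeVar (Set.inclusion hsub) with hψ
  set E := Fintype.equivFin (↑φ.freeVarFinset : Set α) with hE
  set χ := Formula.relabel (⇑E) (ψ : L.Formula _) with hχ
  have key : ∀ w : α → M, φ.Realize w ↔ χ.Realize (fun i => w ↑(E.symm i)) := by
    intro w
    rw [hχ, Formula.realize_relabel]
    have h1 : ((fun i => w ↑(E.symm i)) ∘ ⇑E) = ((w ∘ (↑)) : (↑φ.freeVarFinset : Set α) → M) := by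
      funext x; simp
    rw [h1]
    exact (BoundedFormula.realize_restrictFreeVar' hsub).symm
  rw [key, key]
  exact h _ (fun i => v ((E.symm i) : α)) (fun i => hv _) χ

theorem peg_swap {P : Set (M × M)} (h : PEG L M P) : PEG L M (Prod.swap '' P) := by
  intro n v hv φ
  have hv' : ∀ i, (v i).swap ∈ P := by
    intro i
    obtain ⟨p, hp, hpe⟩ := hv i
    rw [← hpe]; simpa using hp
  exact (h n (fun i => (v i).swap) hv' φ).symm

theorem peg_right_unique {P : Set (M × M)} (h : PEG L M P) {p q : M × M}
    (hp : p ∈ P) (hq : q ∈ P) (h1 : p.1 = q.1) : p.2 = q.2 := by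
  have := h 2 ![p, q] (by intro i; fin_cases i <;> simpa) (Term.equal (Term.var 0) (Term.var 1))
  simp only [Formula.realize_equal, Term.realize_var, Matrix.cons_val_zero, Matrix.cons_val_one,
    Matrix.head_cons] at this
  exact this.mp h1

theorem peg_left_unique {P : Set (M × M)} (h : PEG L M P) {p q : M × M}
    (hp : p ∈ P) (hq : q ∈ P) (h1 : p.2 = q.2) : p.1 = q.1 := by
  have := h 2 ![p, q] (by intro i; fin_cases i <;> simpa) (Term.equal (Term.var 0) (Term.var 1))
  simp only [Formula.realize_equal, Term.realize_var, Matrix.cons_val_zero, Matrix.cons_val_one,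
    Matrix.head_cons] at this
  exact this.mpr h1


section Extend

theorem peg_extend {P : Set (M × M)} (hsat : Paper.IsSat (L := L) M #M)
    (hP : PEG L M P) (hcard : #↥P < #M) (m : M) :
    ∃ y : M, PEG L M (insert (m, y) P) := by
  classical
  set A : Set M := Prod.snd '' P with hA
  have hAcard : #↥A < #M := lt_of_le_of_lt Cardinal.mk_image_le hcard
  have usel : ∀ x : ↥A, ∃ p : M × M, p ∈ P ∧ p.2 = ↑x := by
    rintro ⟨x, p, hp, rfl⟩; exact ⟨p, hp, rfl⟩
  choose u hu1 hu2 using usel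
  set pset : Set (L.Formula (↥A ⊕ Fin 1)) :=
    {φ | φ.Realize (Sum.elim (fun x => (u x).1) (fun _ => m))} with hpset
  have hfin : ∀ S : Finset (L.Formula (↥A ⊕ Fin 1)), ↑S ⊆ pset →
      ∃ b : Fin 1 → M, ∀ φ ∈ S, φ.Realize (Sum.elim (fun x => (x : M)) b) := by
    intro S hS
    set χ : L.Formula (↥A ⊕ Fin 1) := BoundedFormula.iInf (fun φ : ↥S => (φ : L.Formula (↥A ⊕ Fin 1))) with hχ
    set θ : L.Formula ↥A := Formula.iExs (Fin 1) χ with hθ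
    have h1 : θ.Realize (fun x => (u x).1) := by
      rw [hθ, Formula.realize_iExs]
      refine ⟨fun _ => m, ?_⟩
      have h2 := BoundedFormula.realize_iInf (f := fun φ : ↥S => (φ : L.Formula (↥A ⊕ Fin 1)))
        (v := Sum.elim (fun x => (u x).1) (fun _ : Fin 1 => m)) (v' := default)
      exact h2.mpr fun b => hS b.2
    have h2 := peg_arb hP u hu1 θ
    have h3 : θ.Realize (fun x : ↥A => (x : M)) := by
      have he : (fun x : ↥A => (u x).2) = fun x : ↥A => (x : M) := funext fun x => hu2 x
      rw [← he]; exact h2.mp h1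
    rw [hθ, Formula.realize_iExs] at h3
    obtain ⟨b, hb⟩ := h3
    refine ⟨b, fun φ hφ => ?_⟩
    exact (BoundedFormula.realize_iInf).mp hb ⟨φ, hφ⟩
  obtain ⟨b, hball⟩ := hsat A hAcard pset hfin
  refine ⟨b 0, ?_⟩
  intro n v hv φ
  set ρ : Fin n → ↥A ⊕ Fin 1 :=
    fun i => if h : v i ∈ P then Sum.inl ⟨(v i).2, ⟨v i, h, rfl⟩⟩ else Sum.inr 0 with hρ
  set ψ := φ.relabel ρ with hψ
  have comp1 : (Sum.elim (fun x => (u x).1) (fun _ : Fin 1 => m)) ∘ ρ = fun i => (v i).1 := by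
    funext i
    by_cases h : v i ∈ P
    · simp only [hρ, Function.comp_apply, dif_pos h, Sum.elim_inl]
      exact peg_left_unique hP (hu1 _) h (hu2 _)
    · have hvi : v i = (m, b 0) := ((Set.mem_insert_iff.mp (hv i)).resolve_right h)
      simp only [hρ, Function.comp_apply, dif_neg h, Sum.elim_inr]
      rw [hvi]
  have comp2 : (Sum.elim (fun x : ↥A => (x : M)) b) ∘ ρ = fun i => (v i).2 := by
    funext i
    by_cases h : v i ∈ P
    · simp only [hρ, Function.comp_apply, dif_pos h, Sum.elim_inl]
    · have hvi : v i = (m, b 0) := ((Set.mem_insert_iff.mp (hv i)).resolve_right h)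
      simp only [hρ, Function.comp_apply, dif_neg h, Sum.elim_inr]
      rw [hvi]
  have mem_iff : (φ.Realize fun i => (v i).1) ↔ ψ ∈ pset := by
    rw [hpset, Set.mem_setOf_eq, hψ, Formula.realize_relabel, comp1]
  have real_iff : ψ.Realize (Sum.elim (fun x : ↥A => (x : M)) b) ↔
      (φ.Realize fun i => (v i).2) := by
    rw [hψ, Formula.realize_relabel, comp2]
  constructor
  · intro h; exact real_iff.mp (hball ψ (mem_iff.mp h))
  · intro h
    by_contra hneg
    have hnot : ψ.not ∈ pset := by
      rw [hpset, Set.mem_setOf_eq, Formula.realize_not]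
      exact fun hc => hneg (mem_iff.mpr hc)
    have := hball ψ.not hnot
    rw [Formula.realize_not] at this
    exact this (real_iff.mpr h)

theorem peg_extend_left {P : Set (M × M)} (hsat : Paper.IsSat (L := L) M #M)
    (hP : PEG L M P) (hcard : #↥P < #M) (m : M) :
    ∃ x : M, PEG L M (insert (x, m) P) := by
  obtain ⟨y, hy⟩ := peg_extend hsat (peg_swap hP)
    (lt_of_le_of_lt Cardinal.mk_image_le hcard) m
  refine ⟨y, ?_⟩
  have himg : Prod.swap '' (insert (m, y) (Prod.swap '' P)) = insert (y, m) P := by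
    rw [Set.image_insert_eq, Set.image_image]
    simp [Prod.swap_swap]
  have := peg_swap hy
  rwa [himg] at this

end Extend

section BackAndForth

theorem exists_elem_equiv (hfun : ∀ n, IsEmpty (L.Relations n))
    (hsat : Paper.IsSat (L := L) M #M) (hinf : ℵ₀ ≤ #M) {e a : M}
    (hsame : PEG L M {(e, a)}) : ∃ σ : M ≃[L] M, σ e = a := by
  classical
  haveI hMne : Nonempty M := Cardinal.mk_ne_zero_iff.mp (aleph0_pos.trans_le hinf).ne'
  obtain ⟨g⟩ : Nonempty ((#M).ord.ToType ≃ M) := Cardinal.eq.mp (Cardinal.mk_ord_toType #M)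
  have wf : WellFounded ((· < ·) : (#M).ord.ToType → (#M).ord.ToType → Prop) := wellFounded_lt
  set F : (#M).ord.ToType → (M × M) × (M × M) := wf.fix (fun t IH =>
    Classical.epsilon fun q : (M × M) × (M × M) => q.1.1 = g t ∧ q.2.2 = g t ∧
      PEG L M (insert q.1 (insert q.2 (insert (e, a)
        (⋃ s : ↥(Set.Iio t), {(IH s.1 s.2).1, (IH s.1 s.2).2}))))) with hF
  set Pprev : (#M).ord.ToType → Set (M × M) := fun t =>
    insert (e, a) (⋃ s : ↥(Set.Iio t), {(F s.1).1, (F s.1).2}) with hPprev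
  have hFeq : ∀ t, F t = Classical.epsilon fun q : (M × M) × (M × M) =>
      q.1.1 = g t ∧ q.2.2 = g t ∧ PEG L M (insert q.1 (insert q.2 (Pprev t))) := by
    intro t
    exact wf.fix_eq _ t
  have hbase : ∀ t, (e, a) ∈ Pprev t := fun t => Set.mem_insert _ _
  have hpairmem : ∀ {s t : (#M).ord.ToType}, s < t →
      ({(F s).1, (F s).2} : Set (M × M)) ⊆ Pprev t := by
    intro s t hst x hx
    exact Set.mem_insert_iff.mpr (Or.inr (Set.mem_iUnion.mpr ⟨⟨s, hst⟩, hx⟩))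
  have hcard : ∀ t, #↥(Pprev t) < #M := by
    intro t
    have h2 : ∀ s : ↥(Set.Iio t), #↥({(F s.1).1, (F s.1).2} : Set (M × M)) ≤ 2 := by
      intro s
      refine le_trans Cardinal.mk_insert_le ?_
      rw [Cardinal.mk_singleton]
      norm_num
    calc #↥(Pprev t)
        ≤ #↥(⋃ s : ↥(Set.Iio t), ({(F s.1).1, (F s.1).2} : Set (M × M))) + 1 :=
          Cardinal.mk_insert_le
      _ ≤ (Cardinal.sum fun s : ↥(Set.Iio t) =>
            #↥({(F s.1).1, (F s.1).2} : Set (M × M))) + 1 :=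
          add_le_add_left Cardinal.mk_iUnion_le_sum_mk 1
      _ ≤ (Cardinal.sum fun _ : ↥(Set.Iio t) => (2 : Cardinal)) + 1 :=
          add_le_add_left (Cardinal.sum_le_sum _ _ h2) 1
      _ = #↥(Set.Iio t) * 2 + 1 := by rw [Cardinal.sum_const']
      _ < #M := add_lt_of_lt hinf
          (mul_lt_of_lt hinf (Cardinal.mk_Iio_ord_toType t)
            (lt_of_lt_of_le (nat_lt_aleph0 2) hinf))
          (lt_of_lt_of_le one_lt_aleph0 hinf)
  have hspec : ∀ t, (F t).1.1 = g t ∧ (F t).2.2 = g t ∧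
      PEG L M (insert (F t).1 (insert (F t).2 (Pprev t))) := by
    intro t
    refine wf.induction (C := fun t => (F t).1.1 = g t ∧ (F t).2.2 = g t ∧
      PEG L M (insert (F t).1 (insert (F t).2 (Pprev t)))) t ?_
    intro t IH
    have hPprevPEG : PEG L M (Pprev t) := by
      intro n v hv φ
      by_cases hex : ∃ (i : Fin n) (s : (#M).ord.ToType), s < t ∧
          v i ∈ ({(F s).1, (F s).2} : Set (M × M))
      · obtain ⟨i₀, s₀, hs₀, -⟩ := hex
        haveI : Nonempty (Fin n) := ⟨i₀⟩
        have hch : ∀ i : Fin n, v i = (e, a) ∨ ∃ s, s < t ∧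
            v i ∈ ({(F s).1, (F s).2} : Set (M × M)) := by
          intro i
          rcases Set.mem_insert_iff.mp (hv i) with h | h
          · exact Or.inl h
          · obtain ⟨s, hs⟩ := Set.mem_iUnion.mp h
            exact Or.inr ⟨s.1, s.2, hs⟩
        set c : Fin n → (#M).ord.ToType := fun i =>
          if h : ∃ s, s < t ∧ v i ∈ ({(F s).1, (F s).2} : Set (M × M)) then
            Classical.choose h else s₀ with hc
        have hclt : ∀ i, c i < t := by
          intro i
          rw [hc]; dsimp only; split
          · next h => exact (Classical.choose_spec h).1
          · exact hs₀
        set s' : (#M).ord.ToType := Finset.univ.sup' Finset.univ_nonempty c with hs'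
        have hs't : s' < t := by
          rw [hs']
          exact (Finset.sup'_lt_iff _).mpr fun i _ => hclt i
        have hmem : ∀ i, v i ∈ insert (F s').1 (insert (F s').2 (Pprev s')) := by
          intro i
          rcases hch i with h | h
          · rw [h]
            exact Set.mem_insert_iff.mpr (Or.inr (Set.mem_insert_iff.mpr
              (Or.inr (hbase s'))))
          · have hci : v i ∈ ({(F (c i)).1, (F (c i)).2} : Set (M × M)) := by
              rw [hc]; dsimp only; rw [dif_pos h]
              exact (Classical.choose_spec h).2
            have hle : c i ≤ s' := Finset.le_sup' c (Finset.mem_univ i)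
            rcases lt_or_eq_of_le hle with hlt | heq
            · exact Set.mem_insert_iff.mpr (Or.inr (Set.mem_insert_iff.mpr
                (Or.inr (hpairmem hlt hci))))
            · rw [heq] at hci
              rcases Set.mem_insert_iff.mp hci with h1 | h1
              · exact Set.mem_insert_iff.mpr (Or.inl h1)
              · exact Set.mem_insert_iff.mpr (Or.inr (Set.mem_insert_iff.mpr
                  (Or.inl (Set.mem_singleton_iff.mp h1))))
        exact (IH s' hs't).2.2 n v hmem φ
      · have hall : ∀ i, v i ∈ ({(e, a)} : Set (M × M)) := by
          intro i
          rcases Set.mem_insert_iff.mp (hv i) with h | h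
          · simpa using h
          · exfalso
            obtain ⟨s, hs⟩ := Set.mem_iUnion.mp h
            exact hex ⟨i, s.1, s.2, hs⟩
        exact hsame n v hall φ
    obtain ⟨y, hy⟩ := peg_extend hsat hPprevPEG (hcard t) (g t)
    have hc2 : #↥(insert (g t, y) (Pprev t)) < #M :=
      lt_of_le_of_lt Cardinal.mk_insert_le
        (add_lt_of_lt hinf (hcard t) (lt_of_lt_of_le one_lt_aleph0 hinf))
    obtain ⟨x, hx⟩ := peg_extend_left hsat hy hc2 (g t)
    have hexq : ∃ q : (M × M) × (M × M), q.1.1 = g t ∧ q.2.2 = g t ∧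
        PEG L M (insert q.1 (insert q.2 (Pprev t))) :=
      ⟨((g t, y), (x, g t)), rfl, rfl, by rwa [Set.insert_comm]⟩
    rw [hFeq t]
    exact Classical.epsilon_spec hexq
  set Gr : Set (M × M) := insert (e, a) (⋃ t, ({(F t).1, (F t).2} : Set (M × M)))
    with hGrdef
  have hGr : PEG L M Gr := by
    intro n v hv φ
    by_cases hex : ∃ (i : Fin n) (s : (#M).ord.ToType),
        v i ∈ ({(F s).1, (F s).2} : Set (M × M))
    · obtain ⟨i₀, s₀, -⟩ := hex
      haveI : Nonempty (Fin n) := ⟨i₀⟩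
      have hch : ∀ i : Fin n, v i = (e, a) ∨ ∃ s,
          v i ∈ ({(F s).1, (F s).2} : Set (M × M)) := by
        intro i
        rcases Set.mem_insert_iff.mp (hv i) with h | h
        · exact Or.inl h
        · obtain ⟨s, hs⟩ := Set.mem_iUnion.mp h
          exact Or.inr ⟨s, hs⟩
      set c : Fin n → (#M).ord.ToType := fun i =>
        if h : ∃ s, v i ∈ ({(F s).1, (F s).2} : Set (M × M)) then
          Classical.choose h else s₀ with hc
      set s' : (#M).ord.ToType := Finset.univ.sup' Finset.univ_nonempty c with hs'
      have hmem : ∀ i, v i ∈ insert (F s').1 (insert (F s').2 (Pprev s')) := by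
        intro i
        rcases hch i with h | h
        · rw [h]
          exact Set.mem_insert_iff.mpr (Or.inr (Set.mem_insert_iff.mpr
            (Or.inr (hbase s'))))
        · have hci : v i ∈ ({(F (c i)).1, (F (c i)).2} : Set (M × M)) := by
            rw [hc]; dsimp only; rw [dif_pos h]
            exact Classical.choose_spec h
          have hle : c i ≤ s' := Finset.le_sup' c (Finset.mem_univ i)
          rcases lt_or_eq_of_le hle with hlt | heq
          · exact Set.mem_insert_iff.mpr (Or.inr (Set.mem_insert_iff.mpr
              (Or.inr (hpairmem hlt hci))))
          · rw [heq] at hci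
            rcases Set.mem_insert_iff.mp hci with h1 | h1
            · exact Set.mem_insert_iff.mpr (Or.inl h1)
            · exact Set.mem_insert_iff.mpr (Or.inr (Set.mem_insert_iff.mpr
                (Or.inl (Set.mem_singleton_iff.mp h1))))
      exact (hspec s').2.2 n v hmem φ
    · have hall : ∀ i, v i ∈ ({(e, a)} : Set (M × M)) := by
        intro i
        rcases Set.mem_insert_iff.mp (hv i) with h | h
        · simpa using h
        · exfalso
          obtain ⟨s, hs⟩ := Set.mem_iUnion.mp h
          exact hex ⟨i, s, hs⟩
      exact hsame n v hall φ
  have hgraph : ∀ x : M, (x, (F (g.symm x)).1.2) ∈ Gr := by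
    intro x
    have h1 : (F (g.symm x)).1 ∈ Gr :=
      Set.mem_insert_iff.mpr (Or.inr (Set.mem_iUnion.mpr ⟨g.symm x, Set.mem_insert _ _⟩))
    have h2 : (F (g.symm x)).1 = (x, (F (g.symm x)).1.2) := by
      have h3 := (hspec (g.symm x)).1
      rw [Equiv.apply_symm_apply] at h3
      exact Prod.ext h3 rfl
    rwa [h2] at h1
  set σf : M → M := fun x => (F (g.symm x)).1.2 with hσf
  have hsecond : ∀ z : M, ((F (g.symm z)).2.1, z) ∈ Gr := by
    intro z
    have h1 : (F (g.symm z)).2 ∈ Gr :=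
      Set.mem_insert_iff.mpr (Or.inr (Set.mem_iUnion.mpr ⟨g.symm z,
        Set.mem_insert_iff.mpr (Or.inr (Set.mem_singleton _))⟩))
    have h2 : (F (g.symm z)).2 = ((F (g.symm z)).2.1, z) := by
      have h3 := (hspec (g.symm z)).2.1
      rw [Equiv.apply_symm_apply] at h3
      exact Prod.ext rfl h3
    rwa [h2] at h1
  have hsurj : Function.Surjective σf := by
    intro z
    exact ⟨(F (g.symm z)).2.1, peg_right_unique hGr (hgraph _) (hsecond z) rfl⟩
  have hinj : Function.Injective σf := by
    intro x y h
    exact peg_left_unique hGr (hgraph x) (hgraph y) h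
  have hmapfun : ∀ {n} (f : L.Functions n) (x : Fin n → M),
      σf (Structure.funMap f x) = Structure.funMap f (σf ∘ x) := by
    intro n f x
    set w : Fin (n + 1) → M := Fin.snoc x (Structure.funMap f x) with hw
    have h0 : (Term.equal (Term.func f (fun i => Term.var (Fin.castSucc i)))
        (Term.var (Fin.last n)) : L.Formula (Fin (n+1))).Realize w := by
      rw [hw]
      simp [Formula.realize_equal, Term.realize_func, Fin.snoc_castSucc, Fin.snoc_last]
    have h1 := (hGr (n+1) (fun i => (w i, σf (w i))) (fun i => hgraph (w i))
      (Term.equal (Term.func f (fun i => Term.var (Fin.castSucc i)))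
        (Term.var (Fin.last n)))).mp (by exact h0)
    rw [hw] at h1
    simp only [Formula.realize_equal, Term.realize_func, Term.realize_var,
      Fin.snoc_castSucc, Fin.snoc_last] at h1
    exact h1.symm
  refine ⟨⟨Equiv.ofBijective σf ⟨hinj, hsurj⟩, fun {n} f x => hmapfun f x,
    fun {n} r x => (hfun n).elim r⟩, ?_⟩
  show σf e = a
  exact peg_right_unique hGr (hgraph e) (Set.mem_insert _ _) rfl

end BackAndForth

section Algebra

theorem substructure_model {T : L.Theory} (hT : Paper.IsEquational T) (hM : M ⊨ T)
    (S : L.Substructure M) : S ⊨ T := by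
  rw [Theory.model_iff]
  intro φ hφ
  obtain ⟨n, t₁, t₂, rfl⟩ := hT φ hφ
  have hM' : M ⊨ BoundedFormula.alls (t₁.bdEqual t₂) := (Theory.model_iff T).mp hM _ hφ
  unfold Sentence.Realize at hM' ⊢
  rw [BoundedFormula.realize_alls] at hM' ⊢
  intro xs
  rw [BoundedFormula.realize_bdEqual]
  have key : ∀ t : L.Term (Empty ⊕ Fin n),
      (S.subtype) (Term.realize (Sum.elim (default : Empty → ↥S) xs) t)
        = Term.realize (Sum.elim (default : Empty → M) fun i => ↑(xs i)) t := by
    intro t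
    rw [← HomClass.realize_term S.subtype]
    congr 1
    funext z
    rcases z with z | i
    · exact z.elim
    · rfl
  apply S.subtype.injective
  have h2 := hM' fun i => ↑(xs i)
  rw [BoundedFormula.realize_bdEqual] at h2
  have hd : (default : Empty → ↥S) = fun z : Empty => z.elim := funext fun z => z.elim
  rw [hd] at key ⊢
  rw [key, key]
  have hd2 : (default : Empty → M) = fun z : Empty => z.elim := funext fun z => z.elim
  rw [hd2] at h2 ⊢
  exact h2

theorem gen_of_free {T : L.Theory} (hT : Paper.IsEquational T) {X : Set M}
    (hfree : Paper.IsFreeOn T M X) : Substructure.closure L X = ⊤ := by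
  obtain ⟨hM, hext⟩ := hfree
  have hS : Substructure.closure L X ⊨ T := substructure_model hT hM _
  obtain ⟨h, hh, -⟩ := hext ↥(Substructure.closure L X) inferInstance hS
    (fun x => ⟨↑x, Substructure.subset_closure x.2⟩)
  obtain ⟨h0, -, huniq0⟩ := hext M inferInstance hM (fun x => (x : M))
  have h1 : (Substructure.closure L X).subtype.toHom.comp h = h0 :=
    huniq0 _ (fun x => by rw [Hom.comp_apply, hh x]; rfl)
  have h2 : Hom.id L M = h0 := huniq0 _ (fun x => rfl)
  rw [eq_top_iff]
  intro m _
  have h3 : (Substructure.closure L X).subtype.toHom.comp h = Hom.id L M := h1.trans h2.symm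
  have h4 := DFunLike.congr_fun h3 m
  rw [Hom.comp_apply] at h4
  have h5 : ((h m : ↥(Substructure.closure L X)) : M) = m := h4
  rw [← h5]
  exact (h m).2

theorem basis_min {T : L.Theory} {X : Set M} (hfree : Paper.IsFreeOn T M X)
    (htwo : ∃ m₁ m₂ : M, m₁ ≠ m₂) {X' : Set M} (hX' : X' ⊆ X)
    (hgen : Substructure.closure L X' = ⊤) : X ⊆ X' := by
  classical
  intro x hx
  by_contra hxX'
  obtain ⟨m₁, m₂, hne⟩ := htwo
  set m : M := if m₁ = x then m₂ else m₁ with hm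
  have hmx : m ≠ x := by
    rw [hm]; split
    · next h => rw [← h]; exact hne.symm
    · next h => exact h
  obtain ⟨h, hh, -⟩ := hfree.2 M inferInstance hfree.1
    (fun z : ↥X => if (z : M) = x then m else (z : M))
  have hid : Set.EqOn (⇑h) (⇑(Hom.id L M)) X' := by
    intro z hz
    have hzx : z ≠ x := fun hzz => hxX' (hzz ▸ hz)
    have := hh ⟨z, hX' hz⟩
    simp only at this
    rw [if_neg hzx] at this
    exact this
  have heq : h = Hom.id L M := Hom.eq_of_eqOn_dense hgen hid
  have hx1 : h x = x := by rw [heq]; rfl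
  have hx2 : h x = m := by
    have := hh ⟨x, hx⟩
    simpa using this
  exact hmx (hx2 ▸ hx1)

theorem mem_closure_finset {s : Set M} {x : M} (h : x ∈ Substructure.closure L s) :
    ∃ F : Finset M, ↑F ⊆ s ∧ x ∈ Substructure.closure L (↑F : Set M) := by
  classical
  refine Substructure.closure_induction h
    (fun x hx => ⟨{x}, by simpa, Substructure.subset_closure (by simp)⟩) ?_
  intro n f xv hxv
  show ∃ F : Finset M, ↑F ⊆ s ∧ _ ∈ Substructure.closure L (↑F : Set M)
  choose Fi hFi1 hFi2 using hxv
  refine ⟨Finset.univ.biUnion Fi, ?_, ?_⟩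
  · intro z hz
    simp only [Finset.coe_biUnion, Finset.coe_univ, Set.mem_iUnion] at hz
    obtain ⟨i, -, hzi⟩ := hz
    exact hFi1 i hzi
  · apply (Substructure.closure L (↑(Finset.univ.biUnion Fi) : Set M)).fun_mem f
    intro i
    refine Substructure.closure_mono ?_ (hFi2 i)
    intro z hz
    simp only [Finset.coe_biUnion, Finset.coe_univ, Set.mem_iUnion]
    exact ⟨i, Set.mem_univ i, hz⟩

theorem card_le_of_bases {T : L.Theory} {X Y : Set M} (hfree : Paper.IsFreeOn T M X)
    (htwo : ∃ m₁ m₂ : M, m₁ ≠ m₂) (hXgen : Substructure.closure L X = ⊤)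
    (hYgen : Substructure.closure L Y = ⊤) :
    #↥X ≤ #↥Y * ℵ₀ := by
  classical
  have hFy : ∀ y : ↥Y, ∃ F : Finset M, ↑F ⊆ X ∧
      (y : M) ∈ Substructure.closure L (↑F : Set M) := by
    intro y
    exact mem_closure_finset (by rw [hXgen]; trivial)
  choose Fy hFy1 hFy2 using hFy
  set X₀ : Set M := ⋃ y : ↥Y, (↑(Fy y) : Set M) with hX₀
  have hX₀X : X₀ ⊆ X := Set.iUnion_subset fun y => hFy1 y
  have hgen₀ : Substructure.closure L X₀ = ⊤ := by
    rw [eq_top_iff, ← hYgen]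
    rw [Substructure.closure_le]
    intro y hy
    have hsub : (↑(Fy ⟨y, hy⟩) : Set M) ⊆ X₀ := Set.subset_iUnion
      (fun y : ↥Y => (↑(Fy y) : Set M)) ⟨y, hy⟩
    exact SetLike.le_def.mp (Substructure.closure_mono hsub) (hFy2 ⟨y, hy⟩)
  have hXX₀ : X ⊆ X₀ := basis_min hfree htwo hX₀X hgen₀
  calc #↥X ≤ #↥X₀ := Cardinal.mk_le_mk_of_subset hXX₀
    _ ≤ Cardinal.sum (fun y : ↥Y => #↥(↑(Fy y) : Set M)) := Cardinal.mk_iUnion_le_sum_mk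
    _ ≤ Cardinal.sum (fun _ : ↥Y => ℵ₀) :=
        Cardinal.sum_le_sum _ _ (fun y => le_of_lt (lt_aleph0_of_finite _))
    _ = #↥Y * ℵ₀ := Cardinal.sum_const' _ _

theorem free_transport {T : L.Theory} {X : Set M} (hfree : Paper.IsFreeOn T M X)
    (σ : M ≃[L] M) : Paper.IsFreeOn T M (σ '' X) := by
  refine ⟨hfree.1, ?_⟩
  intro B iB hB f
  obtain ⟨h, hh, hu⟩ := hfree.2 B iB hB (fun x => f ⟨σ ↑x, Set.mem_image_of_mem σ x.2⟩)
  refine ⟨h.comp σ.symm.toEmbedding.toHom, ?_, ?_⟩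
  · rintro ⟨y, hy⟩
    obtain ⟨x, hx, rfl⟩ := hy
    rw [Hom.comp_apply]
    have h1 : (σ.symm.toEmbedding.toHom : M →[L] M) (σ x) = x := by
      simp
    rw [h1]
    exact hh ⟨x, hx⟩
  · intro h'' hh''
    have hcomp : h''.comp σ.toEmbedding.toHom = h := by
      apply hu
      intro x
      rw [Hom.comp_apply]
      have h1 : (σ.toEmbedding.toHom : M →[L] M) ↑x = σ ↑x := by simp
      rw [h1]
      exact hh'' ⟨σ ↑x, Set.mem_image_of_mem σ x.2⟩
    apply Hom.ext
    intro y
    have h2 := DFunLike.congr_fun hcomp (σ.symm y)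
    rw [Hom.comp_apply] at h2
    have h3 : (σ.toEmbedding.toHom : M →[L] M) (σ.symm y) = y := by simp
    rw [h3] at h2
    rw [Hom.comp_apply]
    have h4 : (σ.symm.toEmbedding.toHom : M →[L] M) y = σ.symm y := by simp
    rw [h4]
    exact h2

end Algebra

end Stmt4Aux


open Paper in
/-- in a saturated free algebra on an uncountable basis, an element is basic
iff it realizes the type of a basis element over `∅`. -/
theorem stmt_4 {L : FirstOrder.Language.{u, v}} (hfun : ∀ n, IsEmpty (L.Relations n))
    (T : L.Theory) (hT : IsEquational T)
    (M : Type w) [L.Structure M] (I : Set M) (hI : ¬ I.Countable)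
    (hfree : IsFreeOn T M I) (hsat : IsSat (L := L) M (#M))
    (e : M) (he : e ∈ I) (a : M) :
    IsBasic T a ↔ SameType₀ (L := L) (fun _ : Fin 1 => a) (fun _ => e) := by
  classical
  have hInf : I.Infinite := by
    by_contra h
    rw [Set.not_infinite] at h
    exact hI h.countable
  have htwo : ∃ m₁ m₂ : M, m₁ ≠ m₂ := by
    obtain ⟨x, hx, y, hy, hxy⟩ := hInf.nontrivial
    exact ⟨x, y, hxy⟩
  have hIcard : ℵ₀ < #↥I := by
    have := mt (fun h : #↥I ≤ ℵ₀ => Set.countable_coe_iff.mp (Cardinal.mk_le_aleph0_iff.mp h)) hI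
    exact not_le.mp this
  have hMinf : ℵ₀ ≤ #M := le_trans hIcard.le (Cardinal.mk_set_le I)
  constructor
  · rintro ⟨X, haX, hfreeX⟩
    have hIgen := Stmt4Aux.gen_of_free hT hfree
    have hXgen := Stmt4Aux.gen_of_free hT hfreeX
    have hIX' : #↥I ≤ #↥X * ℵ₀ := Stmt4Aux.card_le_of_bases hfree htwo hIgen hXgen
    have hXinf : ℵ₀ ≤ #↥X := by
      by_contra hlt
      push_neg at hlt
      have hle : #↥X * ℵ₀ ≤ ℵ₀ := by
        calc #↥X * ℵ₀ ≤ ℵ₀ * ℵ₀ := mul_le_mul' hlt.le le_rfl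
          _ = ℵ₀ := Cardinal.aleph0_mul_aleph0
      exact absurd (le_trans hIX' hle) (not_le.mpr hIcard)
    have hcardeq : #↥X = #↥I := le_antisymm
      (le_trans (Stmt4Aux.card_le_of_bases hfreeX htwo hXgen hIgen)
        (le_of_eq (Cardinal.mul_aleph0_eq hIcard.le)))
      (le_trans hIX' (le_of_eq (Cardinal.mul_aleph0_eq hXinf)))
    obtain ⟨j₀⟩ := Cardinal.eq.mp hcardeq
    set j : ↥X ≃ ↥I := j₀.trans (Equiv.swap (j₀ ⟨a, haX⟩) ⟨e, he⟩) with hj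
    have hja : j ⟨a, haX⟩ = ⟨e, he⟩ := by rw [hj]; simp
    obtain ⟨h1, hh1, -⟩ := hfreeX.2 M inferInstance hfreeX.1 (fun z => ((j z : M)))
    obtain ⟨h2, hh2, -⟩ := hfree.2 M inferInstance hfree.1 (fun z => ((j.symm z : M)))
    obtain ⟨hid1, -, huX⟩ := hfreeX.2 M inferInstance hfreeX.1 (fun z => (z : M))
    obtain ⟨hid2, -, huI⟩ := hfree.2 M inferInstance hfree.1 (fun z => (z : M))
    have hcomp1 : h2.comp h1 = Language.Hom.id L M := by
      have e1 : h2.comp h1 = hid1 := huX _ (fun z => by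
        rw [Hom.comp_apply, hh1 z, hh2 (j z)]; simp)
      have e2 : Language.Hom.id L M = hid1 := huX _ (fun z => rfl)
      exact e1.trans e2.symm
    have hcomp2 : h1.comp h2 = Language.Hom.id L M := by
      have e1 : h1.comp h2 = hid2 := huI _ (fun z => by
        rw [Hom.comp_apply, hh2 z, hh1 (j.symm z)]; simp)
      have e2 : Language.Hom.id L M = hid2 := huI _ (fun z => rfl)
      exact e1.trans e2.symm
    set σ : M ≃[L] M := ⟨⟨⇑h1, ⇑h2,
      fun z => by have hz := DFunLike.congr_fun hcomp1 z; rw [Hom.comp_apply] at hz; exact hz,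
      fun z => by have hz := DFunLike.congr_fun hcomp2 z; rw [Hom.comp_apply] at hz; exact hz⟩,
      fun {n} f x => h1.map_fun f x, fun {n} r x => (hfun n).elim r⟩ with hσ
    have hσa : σ a = e := by
      show h1 a = e
      have hha := hh1 ⟨a, haX⟩
      rw [hha, hja]
    intro φ
    have hreal := StrongHomClass.realize_formula σ (φ := φ) (v := fun _ : Fin 1 => a)
    rw [← hreal]
    have hc : (⇑σ ∘ fun _ : Fin 1 => a) = fun _ : Fin 1 => e := funext fun _ => hσa
    rw [hc]
  · intro hsame
    have hpeg : Stmt4Aux.PEG L M {((e : M), a)} := by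
      intro n v hv φ
      have hve : ∀ i, v i = (e, a) := fun i => hv i
      have h1 : (fun i => (v i).1) = fun _ : Fin n => e := funext fun i => by rw [hve i]
      have h2 : (fun i => (v i).2) = fun _ : Fin n => a := funext fun i => by rw [hve i]
      rw [h1, h2]
      set ψ := φ.relabel (fun _ : Fin n => (0 : Fin 1)) with hψ
      have k1 : ∀ w : M, φ.Realize (fun _ : Fin n => w) ↔ ψ.Realize (fun _ : Fin 1 => w) := by
        intro w
        rw [hψ, Formula.realize_relabel]
        exact Iff.rfl
      rw [k1 e, k1 a]
      exact (hsame ψ).symm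
    obtain ⟨σ, hσe⟩ := Stmt4Aux.exists_elem_equiv hfun hsat hMinf hpeg
    exact ⟨σ '' I, ⟨e, he, hσe⟩, Stmt4Aux.free_transport hfree σ⟩
end

section
/- Let M be a saturated free algebra on uncountable basis I. If a ∈ M is basic and a lies in the subalgebra generated by e_{α₁},…,e_{αₙ} ∈ I, then for any countable subset C of I disjoint from {e_{α₁},…,e_{αₙ}}, the set C ∪ {a} is basic (extends to a basis of M). -/
open FirstOrder Language Cardinal Set

universe u v w

section Stmt5Aux

open FirstOrder Language Set Paper

namespace Stmt5

variable {L : FirstOrder.Language.{u, v}} {M : Type w} [L.Structure M]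

theorem mem_closure_image (g : M →[L] M) {s : Set M} {m : M}
    (hm : m ∈ Substructure.closure L s) :
    g m ∈ Substructure.closure L (g '' s) := by
  rw [← Substructure.map_closure]
  exact Substructure.mem_map.mpr ⟨m, hm, rfl⟩

theorem exists_finset_support {s : Set M} (h : Substructure.closure L s = ⊤) (m : M) :
    ∃ t : Finset M, ↑t ⊆ s ∧ m ∈ Substructure.closure L (t : Set M) := by
  classical
  have hm : m ∈ Substructure.closure L s := by rw [h]; exact Substructure.mem_top m
  refine Substructure.closure_induction hm
    (fun x hx => ⟨{x}, by simpa using hx, Substructure.subset_closure (by simp)⟩) ?_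
  intro n fn x ih
  choose t ht₁ ht₂ using ih
  refine ⟨Finset.univ.biUnion t, ?_, ?_⟩
  · intro y hy
    simp only [Finset.coe_biUnion, Finset.coe_univ, Set.mem_univ, Set.mem_iUnion,
      Set.iUnion_true] at hy
    obtain ⟨i, hi⟩ := hy
    exact ht₁ i hi
  · refine Substructure.fun_mem _ fn x fun i => ?_
    refine Substructure.closure_mono ?_ (ht₂ i)
    intro y hy
    simp only [Finset.coe_biUnion, Finset.coe_univ, Set.mem_univ, Set.mem_iUnion,
      Set.iUnion_true]
    exact ⟨i, hy⟩

theorem substructure_model {T : L.Theory} (hT : IsEquational T)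
    (hMT : M ⊨ T) (P : L.Substructure M) : (↥P) ⊨ T := by
  rw [Theory.model_iff]
  intro φ hφ
  obtain ⟨n, t₁, t₂, rfl⟩ := hT φ hφ
  have hM : ∀ xs : Fin n → M,
      t₁.realize (Sum.elim (default : Empty → M) xs)
        = t₂.realize (Sum.elim (default : Empty → M) xs) := by
    have h1 : M ⊨ (BoundedFormula.alls (t₁.bdEqual t₂)) := hMT.realize_of_mem _ hφ
    have h2 : (BoundedFormula.alls (t₁.bdEqual t₂)).Realize (default : Empty → M) := h1
    rw [BoundedFormula.realize_alls] at h2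
    intro xs
    exact (BoundedFormula.realize_bdEqual t₁ t₂).mp (h2 xs)
  show (BoundedFormula.alls (t₁.bdEqual t₂)).Realize (default : Empty → ↥P)
  rw [BoundedFormula.realize_alls]
  intro xs
  rw [BoundedFormula.realize_bdEqual]
  apply P.subtype.injective
  have e₁ := HomClass.realize_term (L := L) P.subtype.toHom
    (t := t₁) (v := Sum.elim (default : Empty → ↥P) xs)
  have e₂ := HomClass.realize_term (L := L) P.subtype.toHom
    (t := t₂) (v := Sum.elim (default : Empty → ↥P) xs)
  have hcomp : (⇑P.subtype.toHom) ∘ (Sum.elim (default : Empty → ↥P) xs)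
      = Sum.elim (default : Empty → M) ((⇑P.subtype.toHom) ∘ xs) := by
    funext z
    cases z with
    | inl z => exact z.elim
    | inr z => rfl
  rw [hcomp] at e₁ e₂
  show (P.subtype.toHom) (Term.realize _ t₁) = (P.subtype.toHom) (Term.realize _ t₂)
  rw [← e₁, ← e₂]
  exact hM _

theorem closure_eq_top {T : L.Theory} (hT : IsEquational T) {X : Set M}
    (hfree : IsFreeOn T M X) : Substructure.closure L X = ⊤ := by
  obtain ⟨hMT, hext⟩ := hfree
  have hPT : (↥(Substructure.closure L X)) ⊨ T := substructure_model hT hMT _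
  obtain ⟨h, hh, -⟩ := hext (↥(Substructure.closure L X)) inferInstance hPT
    (fun x => ⟨↑x, Substructure.subset_closure x.2⟩)
  have h2 : ∀ x : X, ((Substructure.closure L X).subtype.toHom.comp h) ↑x = (↑x : M) := by
    intro x
    show (Substructure.closure L X).subtype.toHom (h ↑x) = (↑x : M)
    rw [hh x]
    rfl
  have h3 : ∀ x : X, (Hom.id L M) ↑x = (↑x : M) := fun _ => rfl
  have heq := (hext M inferInstance hMT (fun x : X => (↑x : M))).unique h2 h3
  refine le_antisymm le_top ?_
  intro m _
  have h4 : (Substructure.closure L X).subtype.toHom (h m) = m := by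
    show ((Substructure.closure L X).subtype.toHom.comp h) m = m
    rw [heq]; rfl
  rw [← h4]
  exact (h m).2

theorem isFreeOn_image {T : L.Theory} {X : Set M}
    (hfree : IsFreeOn T M X) (σ : M →[L] M) (hσ : ∀ m, σ (σ m) = m) :
    IsFreeOn T M (σ '' X) := by
  obtain ⟨hMT, hext⟩ := hfree
  refine ⟨hMT, fun B iB hBT f => ?_⟩
  obtain ⟨h, hh, hu⟩ := hext B iB hBT (fun x => f ⟨σ ↑x, ⟨↑x, x.2, rfl⟩⟩)
  refine ⟨h.comp σ, ?_, ?_⟩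
  · rintro ⟨w, x, hxX, rfl⟩
    show h (σ (σ x)) = _
    rw [hσ]
    exact hh ⟨x, hxX⟩
  · intro k hk
    have hcomp : k.comp σ = h := by
      refine hu (k.comp σ) ?_
      intro x
      show k (σ ↑x) = _
      exact hk ⟨σ ↑x, ⟨↑x, x.2, rfl⟩⟩
    ext m
    calc k m = k (σ (σ m)) := by rw [hσ]
    _ = (k.comp σ) (σ m) := rfl
    _ = h (σ m) := by rw [hcomp]

theorem exists_involution {α : Type*} {D₁ D₂ : Set α}
    (hd : ∀ m, m ∈ D₁ → m ∈ D₂ → False) (e : ↥D₁ ≃ ↥D₂) :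
    ∃ p : α → α, (∀ m, p (p m) = m) ∧ (∀ m ∈ D₁, p m ∈ D₂) ∧ (∀ m ∈ D₂, p m ∈ D₁) ∧
      (∀ m, m ∉ D₁ → m ∉ D₂ → p m = m) := by
  classical
  refine ⟨fun m => if hm : m ∈ D₁ then ↑(e ⟨m, hm⟩)
    else if hm' : m ∈ D₂ then ↑(e.symm ⟨m, hm'⟩) else m, ?_, ?_, ?_, ?_⟩
  · intro m
    by_cases hm : m ∈ D₁
    · have h2 : (↑(e ⟨m, hm⟩) : α) ∉ D₁ := fun h => hd _ h (e ⟨m, hm⟩).2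
      simp only [dif_pos hm, dif_neg h2, dif_pos (e ⟨m, hm⟩).2, Subtype.coe_eta,
        Equiv.symm_apply_apply]
    · by_cases hm' : m ∈ D₂
      · have h2 : (↑(e.symm ⟨m, hm'⟩) : α) ∈ D₁ := (e.symm ⟨m, hm'⟩).2
        simp only [dif_neg hm, dif_pos hm', dif_pos h2, Subtype.coe_eta,
          Equiv.apply_symm_apply]
      · simp only [dif_neg hm, dif_neg hm']
  · intro m hm
    simp only [dif_pos hm]
    exact (e ⟨m, hm⟩).2
  · intro m hm
    have hm1 : m ∉ D₁ := fun h => hd m h hm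
    simp only [dif_neg hm1, dif_pos hm]
    exact (e.symm ⟨m, hm⟩).2
  · intro m hm hm'
    simp only [dif_neg hm, dif_neg hm']

theorem exists_closure_set {I S0 : Set M} (suppX suppI : M → Finset M)
    (hS0I : S0 ⊆ I) (hsuppI : ∀ x : M, ↑(suppI x) ⊆ I) (hS0c : S0.Countable) :
    ∃ U : Set M, S0 ⊆ U ∧ U ⊆ I ∧ U.Countable ∧
      ∀ u ∈ U, ∀ x ∈ suppX u, (↑(suppI x) : Set M) ⊆ U := by
  classical
  set F : Set M → Set M := fun s => s ∪ ⋃ u ∈ s, ⋃ x ∈ suppX u, (↑(suppI x) : Set M) with hF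
  have hFsub : ∀ s : Set M, s ⊆ F s := fun s => Set.subset_union_left
  have hFI : ∀ s : Set M, s ⊆ I → F s ⊆ I := by
    intro s hs y hy
    rcases hy with hy | hy
    · exact hs hy
    · simp only [Set.mem_iUnion] at hy
      obtain ⟨u, _, x, _, hy⟩ := hy
      exact hsuppI x hy
  have hFc : ∀ s : Set M, s.Countable → (F s).Countable := by
    intro s hs
    refine hs.union (hs.biUnion fun u _ => ?_)
    exact (Set.Countable.biUnion ((suppX u).countable_toSet)
      (fun x _ => (suppI x).countable_toSet))
  refine ⟨⋃ n, F^[n] S0, ?_, ?_, ?_, ?_⟩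
  · have : F^[0] S0 = S0 := rfl
    exact this ▸ Set.subset_iUnion (fun n => F^[n] S0) 0
  · refine Set.iUnion_subset fun n => ?_
    induction n with
    | zero => exact hS0I
    | succ n ih => rw [Function.iterate_succ_apply']; exact hFI _ ih
  · refine Set.countable_iUnion fun n => ?_
    induction n with
    | zero => exact hS0c
    | succ n ih => rw [Function.iterate_succ_apply']; exact hFc _ ih
  · intro u hu x hx y hy
    simp only [Set.mem_iUnion] at hu
    obtain ⟨n, hn⟩ := hu
    have : y ∈ F^[n+1] S0 := by
      rw [Function.iterate_succ_apply']
      refine Or.inr ?_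
      simp only [Set.mem_iUnion]
      exact ⟨u, hn, x, hx, hy⟩
    exact Set.mem_iUnion.mpr ⟨n + 1, this⟩

theorem exists_cis {α : Type*} {s : Set α} (hs : s.Infinite) :
    ∃ t : Set α, t ⊆ s ∧ t.Countable ∧ t.Infinite := by
  haveI := hs.to_subtype
  refine ⟨Set.range fun k => ((Infinite.natEmbedding ↥s) k : α), ?_, Set.countable_range _, ?_⟩
  · rintro y ⟨k, rfl⟩
    exact ((Infinite.natEmbedding ↥s) k).2
  · exact Set.infinite_range_of_injective
      (Subtype.coe_injective.comp (Infinite.natEmbedding ↥s).injective)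

end Stmt5

end Stmt5Aux

open Paper in
/-- if `a` is basic and lies in the subalgebra generated by finitely many basis
elements, then for any countable `C ⊆ I` avoiding those elements, `C ∪ {a}` is basic. -/
theorem stmt_5 {L : FirstOrder.Language.{u, v}} (hfun : ∀ n, IsEmpty (L.Relations n))
    (T : L.Theory) (hT : IsEquational T)
    (M : Type w) [L.Structure M] (I : Set M) (hcard : #I = ℵ₁)
    (hfree : IsFreeOn T M I) (hsat : IsSat (L := L) M ℵ₁)
    (a : M) (hbasic : IsBasic T a)
    (S : Finset M) (hS : ↑S ⊆ I)
    (haS : a ∈ Substructure.closure L (S : Set M))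
    (C : Set M) (hCcount : C.Countable) (hCI : C ⊆ I) (hdisj : Disjoint C ↑S) :
    IsBasicSet T (insert a C) := by
  classical
  obtain ⟨X, haX, hfreeX⟩ := hbasic
  have hMT : M ⊨ T := hfree.1
  have hextI := hfree.2
  have genI : Substructure.closure L I = ⊤ := Stmt5.closure_eq_top hT hfree
  have genX : Substructure.closure L X = ⊤ := Stmt5.closure_eq_top hT hfreeX
  -- finite supports with respect to each basis
  choose suppX hsuppX₁ hsuppX₂ using fun m => Stmt5.exists_finset_support genX m
  choose suppI hsuppI₁ hsuppI₂ using fun m => Stmt5.exists_finset_support genI m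
  -- I is uncountable
  have hInc : ¬ I.Countable := by
    intro hc
    haveI := hc.to_subtype
    have h1 : (#↥I) ≤ ℵ₀ := Cardinal.mk_le_aleph0
    rw [hcard] at h1
    exact absurd h1 (not_le.mpr Cardinal.aleph0_lt_aleph_one)
  have hdiffInf : ∀ A : Set M, A.Countable → (I \ A).Infinite := by
    intro A hA
    by_contra hfin
    rw [Set.not_infinite] at hfin
    refine hInc ((hA.union hfin.countable).mono ?_)
    intro x hx
    by_cases h : x ∈ A
    · exact Or.inl h
    · exact Or.inr ⟨hx, h⟩
  -- a countably infinite fresh subset I₀ of I avoiding S and C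
  obtain ⟨I₀, hI₀sub, hI₀c, hI₀inf⟩ :=
    Stmt5.exists_cis (hdiffInf (↑S ∪ C) ((S.countable_toSet).union hCcount))
  -- the countable support-closed set U
  obtain ⟨U, hS0U, hUI, hUc, hUclosed⟩ := Stmt5.exists_closure_set (M := M) suppX suppI
    (I := I) (S0 := ↑S ∪ I₀)
    (Set.union_subset hS (hI₀sub.trans Set.diff_subset))
    (fun x => hsuppI₁ x) ((S.countable_toSet).union hI₀c)
  -- the two sets to be swapped
  have hD₁inf : (U \ ↑S).Infinite := by
    refine hI₀inf.mono ?_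
    intro x hx
    exact ⟨hS0U (Or.inr hx), fun hxS => (hI₀sub hx).2 (Or.inl hxS)⟩
  have hD₁c : (U \ ↑S).Countable := hUc.mono Set.diff_subset
  obtain ⟨D₂, hD₂sub, hD₂c, hD₂inf⟩ := Stmt5.exists_cis (hdiffInf (U ∪ C) (hUc.union hCcount))
  have hcard₁ : (#↥(U \ ↑S)) = ℵ₀ := by
    haveI := hD₁c.to_subtype
    haveI := hD₁inf.to_subtype
    exact le_antisymm Cardinal.mk_le_aleph0 (Cardinal.aleph0_le_mk _)
  have hcard₂ : (#↥D₂) = ℵ₀ := by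
    haveI := hD₂c.to_subtype
    haveI := hD₂inf.to_subtype
    exact le_antisymm Cardinal.mk_le_aleph0 (Cardinal.aleph0_le_mk _)
  obtain ⟨e⟩ : Nonempty (↥(U \ ↑S) ≃ ↥D₂) := Cardinal.eq.mp (hcard₁.trans hcard₂.symm)
  have hdisj₁₂ : ∀ m : M, m ∈ U \ ↑S → m ∈ D₂ → False :=
    fun m h1 h2 => (hD₂sub h2).2 (Or.inl h1.1)
  obtain ⟨p, hpp, hp₁, hp₂, hpfix⟩ := Stmt5.exists_involution hdisj₁₂ e
  -- facts about p
  have hpI : ∀ m ∈ I, p m ∈ I := by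
    intro m hm
    by_cases h1 : m ∈ U \ ↑S
    · exact (hD₂sub (hp₁ m h1)).1
    · by_cases h2 : m ∈ D₂
      · exact hUI (hp₂ m h2).1
      · rw [hpfix m h1 h2]; exact hm
  have hpS : ∀ m ∈ (↑S : Set M), p m = m := by
    intro m hm
    exact hpfix m (fun h => h.2 hm) (fun h => (hD₂sub h).2 (Or.inl (hS0U (Or.inl hm))))
  have hpU : ∀ m ∈ U, p m ∈ ↑S ∪ D₂ := by
    intro m hm
    by_cases h1 : m ∈ U \ ↑S
    · exact Or.inr (hp₁ m h1)
    · have hmS : m ∈ (↑S : Set M) := by by_contra h; exact h1 ⟨hm, h⟩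
      rw [hpS m hmS]; exact Or.inl hmS
  have hpV : ∀ m ∈ (↑S : Set M) ∪ D₂, p m ∈ U := by
    intro m hm
    rcases hm with hm | hm
    · rw [hpS m hm]; exact hS0U (Or.inl hm)
    · exact (hp₂ m hm).1
  -- the self-inverse endomorphism σ induced by p
  obtain ⟨σ, hσI, -⟩ := hextI M inferInstance hMT (fun i : ↥I => p ↑i)
  have hσI' : ∀ m ∈ I, σ m = p m := fun m hm => hσI ⟨m, hm⟩
  have hσσ : ∀ m, σ (σ m) = m := by
    have h1 : ∀ i : ↥I, (σ.comp σ) ↑i = (fun i : ↥I => (↑i : M)) i := by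
      intro i
      show σ (σ ↑i) = ↑i
      rw [hσI' _ i.2, hσI' _ (hpI _ i.2), hpp]
    have h2 : ∀ i : ↥I, (Hom.id L M) ↑i = (fun i : ↥I => (↑i : M)) i := fun _ => rfl
    have heq := (hextI M inferInstance hMT (fun i : ↥I => (↑i : M))).unique h1 h2
    intro m
    calc σ (σ m) = (σ.comp σ) m := rfl
    _ = (Hom.id L M) m := by rw [heq]
    _ = m := rfl
  have hσa : σ a = a := by
    have hEq : Set.EqOn (⇑σ) (⇑(Hom.id L M)) ↑S := by
      intro s hs
      show σ s = s
      rw [hσI' _ (hS hs), hpS _ hs]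
    exact Hom.eqOn_closure hEq haS
  -- σ '' X is a basis
  have hfreeX' : IsFreeOn T M (σ '' X) := Stmt5.isFreeOn_image hfreeX σ hσσ
  -- the countable core X₀ of the basis X
  set X₀ : Set M := {a} ∪ ⋃ u ∈ U, (↑(suppX u) : Set M) with hX₀def
  have hX₀X : X₀ ⊆ X := by
    rintro x (rfl | hx)
    · exact haX
    · simp only [Set.mem_iUnion] at hx
      obtain ⟨u, _, hx⟩ := hx
      exact hsuppX₁ u hx
  have hX₀U : ∀ x ∈ X₀, x ∈ Substructure.closure L U := by
    rintro x (rfl | hx)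
    · exact Substructure.closure_mono (fun s hs => hS0U (Or.inl hs)) haS
    · simp only [Set.mem_iUnion] at hx
      obtain ⟨u, hu, hx⟩ := hx
      exact Substructure.closure_mono (hUclosed u hu x hx) (hsuppI₂ x)
  set V : Set M := ↑S ∪ D₂ with hVdef
  have hVI : V ⊆ I := Set.union_subset hS (hD₂sub.trans Set.diff_subset)
  have hVC : ∀ m ∈ V, m ∉ C := by
    rintro m (hm | hm)
    · exact Set.disjoint_right.mp hdisj hm
    · exact fun hc => (hD₂sub hm).2 (Or.inr hc)
  have hσU : ∀ m ∈ U, σ m ∈ V := by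
    intro m hm
    rw [hσI' _ (hUI hm)]
    exact hpU m hm
  have hXV : ∀ x ∈ X₀, σ x ∈ Substructure.closure L V := by
    intro x hx
    have h1 : σ x ∈ Substructure.closure L (σ '' U) := Stmt5.mem_closure_image σ (hX₀U x hx)
    refine Substructure.closure_mono ?_ h1
    rintro y ⟨u, hu, rfl⟩
    exact hσU u hu
  have hcov : ∀ v ∈ V, v ∈ Substructure.closure L (σ '' X₀) := by
    intro v hv
    have hpv : p v ∈ U := hpV v hv
    have h1 : p v ∈ Substructure.closure L X₀ := by
      refine Substructure.closure_mono ?_ (hsuppX₂ (p v))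
      intro y hy
      exact Or.inr (Set.mem_iUnion.mpr ⟨p v, Set.mem_iUnion.mpr ⟨hpv, hy⟩⟩)
    have h2 : σ (p v) ∈ Substructure.closure L (σ '' X₀) := Stmt5.mem_closure_image σ h1
    rwa [hσI' _ (hpI _ (hVI hv)), hpp] at h2
  set E : Set M := I \ (V ∪ C) with hEdef
  set Y : Set M := (C ∪ (σ '' X₀)) ∪ E with hYdef
  have haY : a ∈ Y := Or.inl (Or.inr ⟨a, Or.inl rfl, hσa⟩)
  have hCY : C ⊆ Y := fun c hc => Or.inl (Or.inl hc)
  have hCEY : ∀ m : M, m ∈ C ∪ E → m ∈ Y := by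
    rintro m (hm | hm)
    · exact hCY hm
    · exact Or.inr hm
  have hCEI : ∀ m : M, m ∈ C ∪ E → m ∈ I := by
    rintro m (hm | hm)
    · exact hCI hm
    · exact hm.1
  refine ⟨Y, ?_, hMT, ?_⟩
  · rintro x (rfl | hx)
    · exact haY
    · exact hCY hx
  -- freeness of Y
  intro B iB hBT f
  obtain ⟨h, hh, -⟩ := hfreeX'.2 B iB hBT
    (fun w => if hw : (↑w : M) ∈ Y then f ⟨↑w, hw⟩ else f ⟨a, haY⟩)
  obtain ⟨k, hk, hku⟩ := hextI B iB hBT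
    (fun i : ↥I => if hi : (↑i : M) ∈ C ∪ E then f ⟨↑i, hCEY ↑i hi⟩ else h ↑i)
  have hkh : Set.EqOn (⇑k) (⇑h) V := by
    intro v hv
    have hvCE : v ∉ C ∪ E := by
      rintro (hc | he)
      · exact hVC v hv hc
      · exact he.2 (Or.inl hv)
    have h1 := hk ⟨v, hVI hv⟩
    dsimp only at h1
    rw [dif_neg hvCE] at h1
    exact h1
  have hhf : ∀ (y : M) (hyX : y ∈ σ '' X) (hyY : y ∈ Y), h y = f ⟨y, hyY⟩ := by
    intro y hyX hyY
    have h1 := hh ⟨y, hyX⟩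
    dsimp only at h1
    rw [dif_pos hyY] at h1
    exact h1
  have hkf : ∀ y : ↥Y, k ↑y = f y := by
    rintro ⟨y, hy⟩
    by_cases hyCE : y ∈ C ∪ E
    · have h1 := hk ⟨y, hCEI y hyCE⟩
      dsimp only at h1
      rw [dif_pos hyCE] at h1
      exact h1
    · have hyX : y ∈ σ '' X₀ := by
        rcases hy with (hc | hx) | he
        · exact absurd (Or.inl hc) hyCE
        · exact hx
        · exact absurd (Or.inr he) hyCE
      obtain ⟨x, hx, rfl⟩ := hyX
      have h1 : k (σ x) = h (σ x) := Hom.eqOn_closure hkh (hXV x hx)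
      rw [h1]
      exact hhf (σ x) (Set.mem_image_of_mem σ (hX₀X hx)) hy
  refine ⟨k, hkf, ?_⟩
  intro k' hk'
  refine hku k' ?_
  intro i
  by_cases hiCE : (↑i : M) ∈ C ∪ E
  · show k' ↑i = _
    rw [dif_pos hiCE]
    exact hk' ⟨↑i, hCEY ↑i hiCE⟩
  · have hiV : (↑i : M) ∈ V := by
      by_contra hv
      refine hiCE ?_
      by_cases hc : (↑i : M) ∈ C
      · exact Or.inl hc
      · exact Or.inr ⟨i.2, fun hvc => hvc.elim hv hc⟩
    have hkh' : Set.EqOn (⇑k') (⇑h) (σ '' X₀) := by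
      rintro w ⟨x, hx, rfl⟩
      have hwY : σ x ∈ Y := Or.inl (Or.inr ⟨x, hx, rfl⟩)
      have h1 := hk' ⟨σ x, hwY⟩
      have h2 := hhf (σ x) (Set.mem_image_of_mem σ (hX₀X hx)) hwY
      rw [h1, h2]
    have h3 : k' ↑i = h ↑i := Hom.eqOn_closure hkh' (hcov ↑i hiV)
    show k' ↑i = _
    rw [dif_neg hiCE]
    exact h3
end

section
/- Let T be a countable complete theory with a saturated model M of cardinality ℵ₁ that is contained in the algebraic closure of an indiscernible set I of finite tuples. Let I_ω be a countable infinite subset of I and M_ω = acl(I_ω) (computed in a large elementary extension). Then M_ω is an ω-saturated elementary substructure. -/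
open FirstOrder Language Cardinal Set

universe u v w

namespace Help
variable {L : FirstOrder.Language.{u, v}} {M : Type w} [L.Structure M] {α β : Type*}

/-- realize only depends on values at free variables -/
theorem realize_congr_vars [DecidableEq α] {φ : L.Formula α} {v v' : α → M}
    (h : ∀ a ∈ φ.freeVarFinset, v a = v' a) :
    φ.Realize v ↔ φ.Realize v' := by
  classical
  have h1 := BoundedFormula.realize_restrictFreeVar' (L := L) (M := M)
    (φ := φ) (s := (↑φ.freeVarFinset : Set α)) subset_rfl (v := v) (xs := default)
  have h2 := BoundedFormula.realize_restrictFreeVar' (L := L) (M := M)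
    (φ := φ) (s := (↑φ.freeVarFinset : Set α)) subset_rfl (v := v') (xs := default)
  have e : (v ∘ (↑) : (↑φ.freeVarFinset : Set α) → M) = v' ∘ (↑) := by
    funext a; exact h a a.2
  show BoundedFormula.Realize φ v default ↔ BoundedFormula.Realize φ v' default
  rw [← h1, ← h2, e]

/-- an injective tuple inside an infinite set -/
theorem exists_inj_into {s : Set α} (hs : s.Infinite) (m : ℕ) :
    ∃ f : Fin m → α, Function.Injective f ∧ ∀ i, f i ∈ s := by
  classical
  obtain ⟨t, hts, htf, hcard⟩ := hs.exists_subset_ncard_eq m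
  have hc : htf.toFinset.card = m := by
    rwa [Set.ncard_eq_toFinset_card _ htf] at hcard
  let e := htf.toFinset.equivFinOfCardEq hc
  refine ⟨fun i => (e.symm i : α), ?_, ?_⟩
  · intro i j hij
    have := Subtype.coe_injective hij
    exact e.symm.injective this
  · intro i
    exact hts (htf.mem_toFinset.1 (e.symm i).2)


/-- formula saying that at most `r` elements satisfy `θ` -/
noncomputable def atMost (r : ℕ) (θ : L.Formula (β ⊕ Fin 1)) : L.Formula β :=
  Formula.iAlls (Fin (r + 1))
    ((BoundedFormula.iInf fun i : Fin (r + 1) =>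
        (θ.relabel (Sum.map id fun _ => i) : L.Formula (β ⊕ Fin (r + 1)))).imp
      (BoundedFormula.iSup
        fun p : ↥(Finset.univ.offDiag : Finset (Fin (r + 1) × Fin (r + 1))) =>
        Term.equal (Term.var (Sum.inr p.1.1)) (Term.var (Sum.inr p.1.2))))

theorem realize_atMost {r : ℕ} {θ : L.Formula (β ⊕ Fin 1)} {v : β → M} :
    (atMost (L := L) r θ).Realize v ↔
      ∀ ys : Fin (r + 1) → M, (∀ i, θ.Realize (Sum.elim v fun _ => ys i)) →
        ∃ i j : Fin (r + 1), i ≠ j ∧ ys i = ys j := by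
  unfold atMost
  rw [Formula.realize_iAlls]
  refine forall_congr' fun ys => ?_
  have hw : (fun a => Sum.elim v ys (id a)) = Sum.elim v ys := by funext a; cases a <;> rfl
  show BoundedFormula.Realize _ _ _ ↔ _
  rw [BoundedFormula.realize_imp]
  have hant : (BoundedFormula.iInf fun i : Fin (r + 1) =>
      (θ.relabel (Sum.map id fun _ => i) : L.Formula (β ⊕ Fin (r + 1)))).Realize
        (Sum.elim v ys) default ↔ ∀ i, θ.Realize (Sum.elim v fun _ => ys i) := by
    rw [BoundedFormula.realize_iInf]
    refine ⟨fun h i => ?_, fun h i => ?_⟩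
    · have := h i
      revert this
      show Formula.Realize _ _ → _
      rw [Formula.realize_relabel]
      have he : (Sum.elim v ys ∘ (Sum.map id fun _ => i : β ⊕ Fin 1 → β ⊕ Fin (r+1))) = Sum.elim v (fun _ => ys i) := by
        funext a; cases a <;> rfl
      rw [he]; exact _root_.id
    · show Formula.Realize _ _
      rw [Formula.realize_relabel]
      have he : (Sum.elim v ys ∘ (Sum.map id fun _ => i : β ⊕ Fin 1 → β ⊕ Fin (r+1))) = Sum.elim v (fun _ => ys i) := by
        funext a; cases a <;> rfl
      rw [he]; exact h i
  have hcons : (BoundedFormula.iSup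
      fun p : ↥(Finset.univ.offDiag : Finset (Fin (r + 1) × Fin (r + 1))) =>
        (Term.equal (Term.var (Sum.inr p.1.1)) (Term.var (Sum.inr p.1.2)) :
          L.Formula (β ⊕ Fin (r + 1)))).Realize (Sum.elim v ys) default ↔
        ∃ i j : Fin (r + 1), i ≠ j ∧ ys i = ys j := by
    rw [BoundedFormula.realize_iSup]
    constructor
    · rintro ⟨⟨p, hp⟩, hre⟩
      refine ⟨p.1, p.2, (Finset.mem_offDiag.1 hp).2.2, ?_⟩
      have := (Formula.realize_equal (M := M)).1 hre
      simpa using this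
    · rintro ⟨i, j, hij, heq⟩
      refine ⟨⟨(i, j), Finset.mem_offDiag.2 ⟨Finset.mem_univ _, Finset.mem_univ _, hij⟩⟩, ?_⟩
      show Formula.Realize _ _
      rw [Formula.realize_equal]
      simpa using heq
  rw [hant, hcons]

theorem atMost_of_finite {θ : L.Formula (β ⊕ Fin 1)} {v : β → M}
    (hf : {x : M | θ.Realize (Sum.elim v fun _ => x)}.Finite) :
    (atMost (L := L) hf.toFinset.card θ).Realize v := by
  rw [realize_atMost]
  intro ys hall
  by_contra hcon
  push_neg at hcon
  have hinj : Function.Injective ys := by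
    intro i j hij
    by_contra hne
    exact hcon i j hne hij
  have : Fintype.card (Fin (hf.toFinset.card + 1)) ≤ hf.toFinset.card := by
    have : ∀ i, ys i ∈ hf.toFinset := fun i => hf.mem_toFinset.2 (hall i)
    simpa using Fintype.card_le_of_injective (fun i => (⟨ys i, this i⟩ : ↥hf.toFinset))
      fun i j h => hinj (congrArg Subtype.val h)
  simp at this
theorem finite_of_atMost {r : ℕ} {θ : L.Formula (β ⊕ Fin 1)} {v : β → M}
    (h : (atMost (L := L) r θ).Realize v) :
    {x : M | θ.Realize (Sum.elim v fun _ => x)}.Finite := by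
  by_contra hinf
  obtain ⟨ys, hysinj, hysmem⟩ := exists_inj_into hinf (r + 1)
  obtain ⟨i, j, hij, heq⟩ := (realize_atMost.1 h) ys fun i => hysmem i
  exact hij (hysinj heq)

section Acl
open Paper

variable {N : Type w} [L.Structure N] {k : ℕ}

/-- valuation reading off coordinates of a family of tuples -/
def vAt {ι : Type*} (F : ι → Fin k → N) : ι × Fin k → N := fun p => F p.1 p.2

/-- `b` is algebraic over the tuples `F` -/
def AlgOver {ι : Type*} (F : ι → Fin k → N) (b : N) : Prop :=
  ∃ ψ : L.Formula ((ι × Fin k) ⊕ Fin 1),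
    ψ.Realize (Sum.elim (vAt F) fun _ => b) ∧
    {x : N | ψ.Realize (Sum.elim (vAt F) fun _ => x)}.Finite

theorem coords_mono {J J' : Set (Fin k → N)} (h : J ⊆ J') : coords J ⊆ coords J' := by
  intro c hc
  simp only [coords, Set.mem_iUnion] at hc ⊢
  obtain ⟨e, he, hce⟩ := hc
  exact ⟨e, h he, hce⟩

theorem mem_coords {J : Set (Fin k → N)} {e : Fin k → N} (he : e ∈ J) (i : Fin k) :
    e i ∈ coords J := by
  simp only [coords, Set.mem_iUnion]
  exact ⟨e, he, Set.mem_range_self i⟩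

theorem acl_of_algOver {J : Set (Fin k → N)} {ι : Type*} {F : ι → Fin k → N}
    (hF : ∀ i, F i ∈ J) {b : N} (h : AlgOver (L := L) F b) : InAcl (L := L) (coords J) b := by
  obtain ⟨ψ, hre, hfin⟩ := h
  refine ⟨ψ.relabel (Sum.map (fun p => (⟨F p.1 p.2, mem_coords (hF p.1) p.2⟩ : ↥(coords J)))
    (id : Fin 1 → Fin 1)), ?_, ?_⟩
  · rw [Formula.realize_relabel]
    have : (Sum.elim (fun x : ↥(coords J) => (x : N)) (fun _ => b) ∘
        Sum.map (fun p => (⟨F p.1 p.2, mem_coords (hF p.1) p.2⟩ : ↥(coords J)))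
          (id : Fin 1 → Fin 1)) = Sum.elim (vAt F) (fun _ => b) := by
      funext a; cases a <;> rfl
    rw [this]; exact hre
  · refine hfin.subset ?_
    intro x hx
    rw [Set.mem_setOf_eq, Formula.realize_relabel] at hx
    have : (Sum.elim (fun x : ↥(coords J) => (x : N)) (fun _ => x) ∘
        Sum.map (fun p => (⟨F p.1 p.2, mem_coords (hF p.1) p.2⟩ : ↥(coords J)))
          (id : Fin 1 → Fin 1)) = Sum.elim (vAt F) (fun _ => x) := by
      funext a; cases a <;> rfl
    rw [this] at hx
    exact hx

theorem algOver_mono {ι κ : Type*} {F : ι → Fin k → N} {G : κ → Fin k → N}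
    (h : ∀ i, ∃ j, F i = G j) {b : N} : AlgOver (L := L) F b → AlgOver (L := L) G b := by
  classical
  rintro ⟨ψ, hre, hfin⟩
  choose j hj using h
  have key : ∀ x : N, (Sum.elim (vAt G) (fun _ => x) ∘
      Sum.map (fun p : ι × Fin k => (j p.1, p.2)) (id : Fin 1 → Fin 1)) =
        Sum.elim (vAt F) (fun _ => x) := by
    intro x; funext a
    rcases a with p | i
    · show vAt G (j p.1, p.2) = vAt F p
      show G (j p.1) p.2 = F p.1 p.2
      rw [hj p.1]
    · rfl
  refine ⟨ψ.relabel (Sum.map (fun p : ι × Fin k => (j p.1, p.2)) (id : Fin 1 → Fin 1)), ?_, ?_⟩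
  · rw [Formula.realize_relabel, key]; exact hre
  · refine hfin.subset ?_
    intro x hx
    rw [Set.mem_setOf_eq, Formula.realize_relabel, key] at hx
    exact hx

theorem algOver_of_acl {J : Set (Fin k → N)} (hJ : J.Nonempty) {b : N}
    (h : InAcl (L := L) (coords J) b) :
    ∃ (u : ℕ) (F : Fin u → Fin k → N), Function.Injective F ∧ (∀ i, F i ∈ J) ∧
      AlgOver (L := L) F b := by
  classical
  obtain ⟨φ, hre, hfin⟩ := h
  have hch : ∀ c : ↥(coords J), ∃ e, e ∈ J ∧ ∃ i : Fin k, e i = (c : N) := by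
    rintro ⟨c, hc⟩
    simp only [coords, Set.mem_iUnion, Set.mem_range] at hc
    obtain ⟨e, he, i, hei⟩ := hc
    exact ⟨e, he, i, hei⟩
  choose tup htupJ idx hidx using hch
  obtain ⟨e₀, he₀⟩ := hJ
  set Tset : Finset (Fin k → N) :=
    insert e₀ (φ.freeVarFinset.image (Sum.elim (fun c => tup c) (fun _ => e₀))) with hTset
  have hTJ : ∀ e ∈ Tset, e ∈ J := by
    intro e he
    rw [hTset, Finset.mem_insert] at he
    rcases he with rfl | he
    · exact he₀
    · obtain ⟨a, _, rfl⟩ := Finset.mem_image.1 he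
      rcases a with c | i
      · exact htupJ c
      · exact he₀
  set u := Tset.card with hu
  set eqv : ↥Tset ≃ Fin u := Tset.equivFin with heqv
  refine ⟨u, fun i => ((eqv.symm i : ↥Tset) : Fin k → N), ?_, ?_, ?_⟩
  · intro i j hij
    exact eqv.symm.injective (Subtype.coe_injective hij)
  · intro i; exact hTJ _ (eqv.symm i).2
  · set F : Fin u → Fin k → N := fun i => ((eqv.symm i : ↥Tset) : Fin k → N) with hF
    set ρ : ↥(coords J) ⊕ Fin 1 → (Fin u × Fin k) ⊕ Fin 1 :=
      Sum.map (fun c => if h : tup c ∈ Tset then (eqv ⟨tup c, h⟩, idx c)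
        else (eqv ⟨e₀, Finset.mem_insert_self _ _⟩, idx c)) (id : Fin 1 → Fin 1) with hρ
    have key : ∀ x : N, (φ.relabel ρ).Realize (Sum.elim (vAt F) fun _ => x) ↔
        φ.Realize (Sum.elim (fun c : ↥(coords J) => (c : N)) fun _ => x) := by
      intro x
      rw [Formula.realize_relabel]
      refine realize_congr_vars ?_
      intro a ha
      rcases a with c | i
      · have hmem : tup c ∈ Tset := by
          rw [hTset]
          refine Finset.mem_insert_of_mem (Finset.mem_image.2 ⟨Sum.inl c, ha, rfl⟩)
        show (Sum.elim (vAt F) (fun _ => x)) (ρ (Sum.inl c)) = (c : N)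
        rw [hρ]
        show (Sum.elim (vAt F) (fun _ => x))
          (Sum.inl (if h : tup c ∈ Tset then (eqv ⟨tup c, h⟩, idx c)
            else (eqv ⟨e₀, Finset.mem_insert_self _ _⟩, idx c))) = (c : N)
        rw [dif_pos hmem]
        show vAt F (eqv ⟨tup c, hmem⟩, idx c) = (c : N)
        show F (eqv ⟨tup c, hmem⟩) (idx c) = (c : N)
        rw [hF]
        show ((eqv.symm (eqv ⟨tup c, hmem⟩) : ↥Tset) : Fin k → N) (idx c) = (c : N)
        rw [Equiv.symm_apply_apply]
        exact hidx c
      · rfl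
    exact ⟨φ.relabel ρ, (key b).2 hre, hfin.subset fun x hx => by
      rw [Set.mem_setOf_eq, key x] at hx; exact hx⟩

theorem coords_mem_acl {J : Set (Fin k → N)} {c : N} (hc : c ∈ coords J) :
    InAcl (L := L) (coords J) c := by
  refine ⟨Term.equal (Term.var (Sum.inr (0 : Fin 1))) (Term.var (Sum.inl ⟨c, hc⟩)), ?_, ?_⟩
  · rw [Formula.realize_equal]; simp
  · refine (Set.finite_singleton c).subset ?_
    intro x hx
    rw [Set.mem_setOf_eq, Formula.realize_equal] at hx
    simpa using hx

theorem inAcl_mono {J J' : Set (Fin k → N)} (h : J ⊆ J') {b : N}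
    (hb : InAcl (L := L) (coords J) b) : InAcl (L := L) (coords J') b := by
  obtain ⟨φ, hre, hfin⟩ := hb
  have key : ∀ x : N, (Sum.elim (fun c : ↥(coords J') => (c : N)) (fun _ => x) ∘
      Sum.map (Set.inclusion (coords_mono h)) (id : Fin 1 → Fin 1)) =
        Sum.elim (fun c : ↥(coords J) => (c : N)) (fun _ => x) := by
    intro x; funext a; cases a <;> rfl
  refine ⟨φ.relabel (Sum.map (Set.inclusion (coords_mono h)) (id : Fin 1 → Fin 1)),
    ?_, ?_⟩
  · rw [Formula.realize_relabel, key]; exact hre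
  · refine hfin.subset fun x hx => ?_
    rw [Set.mem_setOf_eq, Formula.realize_relabel, key] at hx
    exact hx

end Acl

section Transfer
open Paper

variable {N : Type w} [L.Structure N] {k : ℕ}

theorem transfer {I : Set (Fin k → N)}
    (hind : IsIndiscSet (L := L) I) (hinf : I.Infinite)
    {u t s : ℕ} (F : Fin u → Fin k → N) (g g' : Fin t → Fin k → N)
    (hinj : Function.Injective (Sum.elim F (Sum.elim g g')))
    (hFI : ∀ i, F i ∈ I) (hgI : ∀ i, g i ∈ I) (hg'I : ∀ i, g' i ∈ I)
    (as : Fin s → N) (χ : Fin s → L.Formula ((Fin u × Fin k) ⊕ Fin 1))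
    (hχre : ∀ i, (χ i).Realize (Sum.elim (vAt F) fun _ => as i))
    (hχfin : ∀ i, {x : N | (χ i).Realize (Sum.elim (vAt F) fun _ => x)}.Finite)
    (φ : L.Formula (Fin s ⊕ ((Fin u ⊕ Fin t) × Fin k))) :
    φ.Realize (Sum.elim as (vAt (Sum.elim F g))) ↔
      φ.Realize (Sum.elim as (vAt (Sum.elim F g'))) := by
  classical
  set C : Set (Fin s → N) :=
    {y | ∀ i, (χ i).Realize (Sum.elim (vAt F) fun _ => y i)} with hC
  have hCfin : C.Finite := by
    refine Set.Finite.subset (Set.Finite.pi (fun i => hχfin i)) ?_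
    intro y hy
    rw [Set.mem_pi]
    intro i _
    exact hy i
  have hasC : as ∈ C := fun i => hχre i
  set Pred : (Fin t → Fin k → N) → (Fin t → Fin k → N) → Prop := fun d d' =>
    ∃ y ∈ C, φ.Realize (Sum.elim y (vAt (Sum.elim F d))) ∧
      ¬ φ.Realize (Sum.elim y (vAt (Sum.elim F d'))) with hPred
  set Config : (Fin t → Fin k → N) → (Fin t → Fin k → N) → Prop := fun d d' =>
    Function.Injective (Sum.elim F (Sum.elim d d')) ∧ (∀ i, d i ∈ I) ∧ (∀ i, d' i ∈ I)
    with hConfig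
  have hcfg : Config g g' := ⟨hinj, hgI, hg'I⟩
  have hcfg_symm : ∀ d d', Config d d' → Config d' d := by
    rintro d d' ⟨h1, h2, h3⟩
    refine ⟨?_, h3, h2⟩
    have heq : Sum.elim F (Sum.elim d' d) =
        (Sum.elim F (Sum.elim d d')) ∘ (Equiv.sumCongr (Equiv.refl (Fin u))
          (Equiv.sumComm (Fin t) (Fin t))) := by
      funext a
      rcases a with a | a
      · rfl
      · rcases a with a | a <;> rfl
    rw [heq]
    exact h1.comp (Equiv.injective _)
  set n : ℕ := u + (t + t) with hn
  set q : Fin n ≃ Fin u ⊕ (Fin t ⊕ Fin t) :=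
    finSumFinEquiv.symm.trans (Equiv.sumCongr (Equiv.refl (Fin u)) finSumFinEquiv.symm)
    with hq
  set μ : Fin s → ((Fin u × Fin k) ⊕ Fin 1) → (Fin s ⊕ (Fin n × Fin k)) :=
    fun i a => match a with
      | Sum.inl p => Sum.inr (q.symm (Sum.inl p.1), p.2)
      | Sum.inr _ => Sum.inl i
    with hμ
  set Φ : L.Formula (Fin s ⊕ (Fin n × Fin k)) :=
    (((BoundedFormula.iInf fun i : Fin s =>
        ((χ i).relabel (μ i) : L.Formula (Fin s ⊕ (Fin n × Fin k)))) ⊓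
      (φ.relabel (Sum.map id (fun p : (Fin u ⊕ Fin t) × Fin k =>
        (q.symm (Sum.map id Sum.inl p.1), p.2))))) ⊓
      (φ.relabel (Sum.map id (fun p : (Fin u ⊕ Fin t) × Fin k =>
        (q.symm (Sum.map id Sum.inr p.1), p.2)))).not) with hΦ
  set Θ : L.Formula (Fin n × Fin k) :=
    Formula.iExs (Fin s) (Φ.relabel (Sum.elim Sum.inr Sum.inl)) with hΘ
  have hΘsem : ∀ d d' : Fin t → Fin k → N,
      Θ.Realize (fun p : Fin n × Fin k => Sum.elim F (Sum.elim d d') (q p.1) p.2) ↔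
        Pred d d' := by
    intro d d'
    set E := Sum.elim F (Sum.elim d d') with hE
    set w : Fin n × Fin k → N := fun p => E (q p.1) p.2 with hw
    rw [hΘ, Formula.realize_iExs]
    simp only [Formula.realize_relabel]
    have key : ∀ y : Fin s → N,
        Φ.Realize (fun a => Sum.elim w y (Sum.elim Sum.inr Sum.inl a)) ↔
        (y ∈ C ∧ φ.Realize (Sum.elim y (vAt (Sum.elim F d))) ∧
          ¬ φ.Realize (Sum.elim y (vAt (Sum.elim F d')))) := by
      intro y
      rw [hΦ]
      have hval : (fun a => Sum.elim w y (Sum.elim Sum.inr Sum.inl a)) = Sum.elim y w := by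
        funext a
        rcases a with a | a <;> rfl
      rw [hval, Formula.realize_inf, Formula.realize_inf, Formula.realize_not]
      have h1 : (BoundedFormula.iInf fun i : Fin s =>
          ((χ i).relabel (μ i) : L.Formula (Fin s ⊕ (Fin n × Fin k)))).Realize
            (Sum.elim y w) (default : Fin 0 → N) ↔ y ∈ C := by
        rw [BoundedFormula.realize_iInf]
        have hei : ∀ i : Fin s, ((Sum.elim y w) ∘ (μ i)) = Sum.elim (vAt F) (fun _ => y i) := by
          intro i
          funext a
          rcases a with p | z
          · show w (q.symm (Sum.inl p.1), p.2) = vAt F p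
            show E (q (q.symm (Sum.inl p.1))) p.2 = F p.1 p.2
            rw [Equiv.apply_symm_apply]
            rfl
          · rfl
        refine ⟨fun h i => ?_, fun h i => ?_⟩
        · have hh := h i
          revert hh
          show Formula.Realize _ _ → _
          rw [Formula.realize_relabel, hei i]
          exact _root_.id
        · show Formula.Realize _ _
          rw [Formula.realize_relabel, hei i]
          exact h i
      have h2 : ∀ (d₁ : Fin t → Fin k → N)
          (inc : Fin u ⊕ Fin t → Fin u ⊕ (Fin t ⊕ Fin t)),
          (∀ p : (Fin u ⊕ Fin t) × Fin k, E (inc p.1) p.2 = Sum.elim F d₁ p.1 p.2) →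
          ((φ.relabel (Sum.map id (fun p : (Fin u ⊕ Fin t) × Fin k =>
              (q.symm (inc p.1), p.2)))).Realize (Sum.elim y w) ↔
            φ.Realize (Sum.elim y (vAt (Sum.elim F d₁)))) := by
        intro d₁ inc hinc
        rw [Formula.realize_relabel]
        have he : ((Sum.elim y w) ∘ (Sum.map id (fun p : (Fin u ⊕ Fin t) × Fin k =>
            (q.symm (inc p.1), p.2)))) = Sum.elim y (vAt (Sum.elim F d₁)) := by
          funext a
          rcases a with i | p
          · rfl
          · show w (q.symm (inc p.1), p.2) = vAt (Sum.elim F d₁) p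
            show E (q (q.symm (inc p.1))) p.2 = Sum.elim F d₁ p.1 p.2
            rw [Equiv.apply_symm_apply]
            exact hinc p
        rw [he]
      have h2a := h2 d (Sum.map id Sum.inl) (by rintro ⟨a | a, c⟩ <;> rfl)
      have h2b := h2 d' (Sum.map id Sum.inr) (by rintro ⟨a | a, c⟩ <;> rfl)
      constructor
      · rintro ⟨⟨hA, hB⟩, hC⟩
        exact ⟨h1.1 hA, h2a.1 hB, fun hc => hC (h2b.2 hc)⟩
      · rintro ⟨hA, hB, hC⟩
        exact ⟨⟨h1.2 hA, h2a.2 hB⟩, fun hc => hC (h2b.1 hc)⟩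
    constructor
    · rintro ⟨y, hy⟩
      obtain ⟨hy1, hy2, hy3⟩ := (key y).1 hy
      exact ⟨y, hy1, hy2, hy3⟩
    · rintro ⟨y, hy1, hy2, hy3⟩
      exact ⟨y, (key y).2 ⟨hy1, hy2, hy3⟩⟩
  have huni : ∀ d d' e e', Config d d' → Config e e' → (Pred d d' ↔ Pred e e') := by
    rintro d d' e e' ⟨hdi, hdI, hd'I⟩ ⟨hei, heI, he'I⟩
    rw [← hΘsem d d', ← hΘsem e e']
    refine hind n (fun i => Sum.elim F (Sum.elim d d') (q i))
      (fun i => Sum.elim F (Sum.elim e e') (q i)) (hdi.comp q.injective)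
      (hei.comp q.injective) ?_ ?_ Θ
    · intro i
      show Sum.elim F (Sum.elim d d') (q i) ∈ I
      rcases hqi : q i with a | (a | a)
      · exact hFI a
      · exact hdI a
      · exact hd'I a
    · intro i
      show Sum.elim F (Sum.elim e e') (q i) ∈ I
      rcases hqi : q i with a | (a | a)
      · exact hFI a
      · exact heI a
      · exact he'I a
  have hnot : ∀ d d', Config d d' → ¬ Pred d d' := by
    intro d₀ d₀' hcfg₀ hP₀
    set m : ℕ := hCfin.toFinset.card with hm
    set R : ℕ := 2 ^ m with hR
    have hWinf : (I \ Set.range F).Infinite := hinf.diff (Set.finite_range F)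
    obtain ⟨W, hWinj, hWmem⟩ := exists_inj_into hWinf ((R + 1) * t)
    set dseq : Fin (R + 1) → Fin t → Fin k → N :=
      fun i j => W (finProdFinEquiv (i, j)) with hdseq
    have hW2 : ∀ p p' : Fin (R + 1) × Fin t,
        W (finProdFinEquiv p) = W (finProdFinEquiv p') → p = p' :=
      fun p p' h => finProdFinEquiv.injective (hWinj h)
    have hdseqI : ∀ i j, dseq i j ∈ I := fun i j => (hWmem _).1
    have hFi : Function.Injective F := by
      intro a b hab
      have := hinj (show Sum.elim F (Sum.elim g g') (Sum.inl a) =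
        Sum.elim F (Sum.elim g g') (Sum.inl b) from hab)
      simpa using this
    have hWF : ∀ (l : Fin ((R + 1) * t)) (a : Fin u), W l ≠ F a := by
      intro l a hcon
      exact (hWmem l).2 ⟨a, hcon.symm⟩
    have hcfgseq : ∀ i j : Fin (R + 1), i ≠ j → Config (dseq i) (dseq j) := by
      intro i j hij
      refine ⟨?_, fun a => hdseqI i a, fun a => hdseqI j a⟩
      intro x y hxy
      rcases x with a | x
      · rcases y with b | y
        · simp only [Sum.elim_inl] at hxy
          rw [hFi hxy]
        · exfalso
          rcases y with b | b <;>
            exact hWF _ a (by simpa using hxy.symm)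
      · rcases y with b | y
        · exfalso
          rcases x with c | c <;>
            exact hWF _ b (by simpa using hxy)
        · rcases x with c | c <;> rcases y with b | b
          · have hcb : c = b := (Prod.ext_iff.1 (hW2 (i, c) (i, b) (by simpa using hxy))).2
            rw [hcb]
          · exact absurd (Prod.ext_iff.1 (hW2 (i, c) (j, b) (by simpa using hxy))).1 hij
          · exact absurd (Prod.ext_iff.1 (hW2 (j, c) (i, b) (by simpa using hxy))).1
              (Ne.symm hij)
          · have hcb : c = b := (Prod.ext_iff.1 (hW2 (j, c) (j, b) (by simpa using hxy))).2
            rw [hcb]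
    set pat : Fin (R + 1) → (↥hCfin.toFinset → Bool) := fun i y =>
      decide (φ.Realize (Sum.elim (y : Fin s → N) (vAt (Sum.elim F (dseq i))))) with hpat'
    have hcard : Fintype.card (↥hCfin.toFinset → Bool) < Fintype.card (Fin (R + 1)) := by
      rw [Fintype.card_fun]
      simp [hR, hm]
    obtain ⟨i, j, hij, hpatij⟩ := Fintype.exists_ne_map_eq_of_card_lt pat hcard
    have hPij : Pred (dseq i) (dseq j) :=
      (huni _ _ _ _ (hcfgseq i j hij) hcfg₀).2 hP₀
    obtain ⟨y, hyC, hy1, hy2⟩ := hPij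
    have hb1 : pat i ⟨y, hCfin.mem_toFinset.2 hyC⟩ = true := decide_eq_true hy1
    have hb2 : pat j ⟨y, hCfin.mem_toFinset.2 hyC⟩ = false := decide_eq_false hy2
    rw [hpatij] at hb1
    rw [hb1] at hb2
    exact Bool.noConfusion hb2
  constructor
  · intro h1
    by_contra h2
    exact hnot g g' hcfg ⟨as, hasC, h1, h2⟩
  · intro h1
    by_contra h2
    exact hnot g' g (hcfg_symm _ _ hcfg) ⟨as, hasC, h1, h2⟩

end Transfer

section Main
open Paper

variable {N : Type w} [L.Structure N] {k : ℕ}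

theorem main_sat {I : Set (Fin k → N)} (hind : IsIndiscSet (L := L) I) (hIinf : I.Infinite)
    (hMsat : SatInside (L := L) {x : N | InAcl (L := L) (coords I) x} ℵ₁)
    (Iω : Set (Fin k → N)) (hIω : Iω ⊆ I) (hi : Iω.Infinite) :
    SatInside (L := L) {x : N | InAcl (L := L) (coords Iω) x} ℵ₀ := by
  classical
  intro A hA hAcard p hp
  have hAfin : A.Finite := Cardinal.lt_aleph0_iff_set_finite.1 hAcard
  set s : ℕ := hAfin.toFinset.card with hs
  set aeq : ↥hAfin.toFinset ≃ Fin s := hAfin.toFinset.equivFin with haeq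
  set as : Fin s → N := fun i => ((aeq.symm i : ↥hAfin.toFinset) : N) with has
  have hasA : ∀ i, as i ∈ A := fun i => hAfin.mem_toFinset.1 (aeq.symm i).2
  set aidx : ↥A → Fin s := fun c => aeq ⟨(c : N), hAfin.mem_toFinset.2 c.2⟩ with haidx
  have haidx_eq : ∀ c : ↥A, as (aidx c) = (c : N) := by
    intro c
    rw [has, haidx]
    show ((aeq.symm (aeq ⟨(c : N), _⟩) : ↥hAfin.toFinset) : N) = (c : N)
    rw [Equiv.symm_apply_apply]
  -- algebraic supports over Iω for the parameters
  have hsupp : ∀ i : Fin s, ∃ (uu : ℕ) (FF : Fin uu → Fin k → N),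
      Function.Injective FF ∧ (∀ j, FF j ∈ Iω) ∧ AlgOver (L := L) FF (as i) :=
    fun i => algOver_of_acl hi.nonempty (hA (hasA i))
  choose uA FA hFAinj hFAIω hFAalg using hsupp
  -- a realization of p inside acl(I)
  have hAS : A ⊆ {x : N | InAcl (L := L) (coords I) x} := fun x hx => inAcl_mono hIω (hA hx)
  obtain ⟨bb, hbS, hbp⟩ := hMsat A hAS
    (hAcard.trans Cardinal.aleph0_lt_aleph_one) p hp
  -- algebraic support of b over I
  obtain ⟨wD, D, hDinj, hDI, hDalg⟩ := algOver_of_acl hIinf.nonempty hbS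
  -- the Iω-tuples used
  set U : Finset (Fin k → N) :=
    (Finset.univ.biUnion fun i : Fin s => Finset.image (FA i) Finset.univ) ∪
      (Finset.image D Finset.univ).filter (· ∈ Iω) with hU
  have hUIω : ∀ e ∈ U, e ∈ Iω := by
    intro e he
    rw [hU, Finset.mem_union] at he
    rcases he with he | he
    · obtain ⟨i, _, hi2⟩ := Finset.mem_biUnion.1 he
      obtain ⟨j, _, rfl⟩ := Finset.mem_image.1 hi2
      exact hFAIω i j
    · exact (Finset.mem_filter.1 he).2
  set u : ℕ := U.card with hu
  set ueq : ↥U ≃ Fin u := U.equivFin with hueq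
  set F : Fin u → Fin k → N := fun i => ((ueq.symm i : ↥U) : Fin k → N) with hF
  have hFIω : ∀ i, F i ∈ Iω := fun i => hUIω _ (ueq.symm i).2
  have hFmem : ∀ i, F i ∈ U := fun i => (ueq.symm i).2
  have hFidx : ∀ e ∈ U, ∃ i, F i = e := by
    intro e he
    refine ⟨ueq ⟨e, he⟩, ?_⟩
    rw [hF]
    show ((ueq.symm (ueq ⟨e, he⟩) : ↥U) : Fin k → N) = e
    rw [Equiv.symm_apply_apply]
  -- the I ∖ Iω tuples used
  set G : Finset (Fin k → N) := (Finset.image D Finset.univ).filter (· ∉ Iω) with hG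
  set t : ℕ := G.card with ht
  set geq : ↥G ≃ Fin t := G.equivFin with hgeq
  set g : Fin t → Fin k → N := fun i => ((geq.symm i : ↥G) : Fin k → N) with hg
  have hgmem : ∀ i, g i ∈ G := fun i => (geq.symm i).2
  have hgI : ∀ i, g i ∈ I := by
    intro i
    have := hgmem i
    rw [hG, Finset.mem_filter] at this
    obtain ⟨j, _, hDg⟩ := Finset.mem_image.1 this.1
    rw [← hDg]
    exact hDI j
  have hgnIω : ∀ i, g i ∉ Iω := by
    intro i
    have := hgmem i
    rw [hG, Finset.mem_filter] at this
    exact this.2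
  -- relabel parameter supports to F
  have hχ' : ∀ i : Fin s, AlgOver (L := L) F (as i) := by
    intro i
    refine algOver_mono (fun j => ?_) (hFAalg i)
    obtain ⟨l, hl⟩ := hFidx (FA i j) (Finset.mem_union_left _
      (Finset.mem_biUnion.2 ⟨i, Finset.mem_univ _, Finset.mem_image.2
        ⟨j, Finset.mem_univ _, rfl⟩⟩))
    exact ⟨l, hl.symm⟩
  choose χ hχre hχfin using hχ'
  -- relabel the support of b to (F, g)
  have hψ' : AlgOver (L := L) (Sum.elim F g) (bb 0) := by
    refine algOver_mono (fun j => ?_) hDalg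
    by_cases hDj : D j ∈ Iω
    · obtain ⟨l, hl⟩ := hFidx (D j) (Finset.mem_union_right _
        (Finset.mem_filter.2 ⟨Finset.mem_image.2 ⟨j, Finset.mem_univ _, rfl⟩, hDj⟩))
      exact ⟨Sum.inl l, hl.symm⟩
    · have hDG : D j ∈ G := Finset.mem_filter.2
        ⟨Finset.mem_image.2 ⟨j, Finset.mem_univ _, rfl⟩, hDj⟩
      refine ⟨Sum.inr (geq ⟨D j, hDG⟩), ?_⟩
      show D j = g (geq ⟨D j, hDG⟩)
      rw [hg]
      show D j = ((geq.symm (geq ⟨D j, hDG⟩) : ↥G) : Fin k → N)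
      rw [Equiv.symm_apply_apply]
  obtain ⟨ψ, hψre, hψfin⟩ := hψ'
  set r : ℕ := hψfin.toFinset.card with hr
  have hbound : (atMost (L := L) r ψ).Realize (vAt (Sum.elim F g)) := atMost_of_finite hψfin
  -- fresh tuples in Iω
  have hfresh : (Iω \ ↑U).Infinite := hi.diff U.finite_toSet
  obtain ⟨g', hg'inj, hg'mem⟩ := exists_inj_into hfresh t
  have hg'Iω : ∀ i, g' i ∈ Iω := fun i => (hg'mem i).1
  have hg'nU : ∀ i, g' i ∉ ↑U := fun i => (hg'mem i).2
  -- joint injectivity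
  have hFinj : Function.Injective F := fun i j hij => ueq.symm.injective (Subtype.coe_injective hij)
  have hginj : Function.Injective g := fun i j hij => geq.symm.injective (Subtype.coe_injective hij)
  have hinj : Function.Injective (Sum.elim F (Sum.elim g g')) := by
    intro x y hxy
    rcases x with a | (a | a) <;> rcases y with b | (b | b)
    · have h' : F a = F b := hxy
      rw [hFinj h']
    · have h' : F a = g b := hxy
      exact absurd (h' ▸ hFIω a) (hgnIω b)
    · have h' : F a = g' b := hxy
      exact absurd (Finset.mem_coe.2 (h' ▸ hFmem a)) (hg'nU b)
    · have h' : g a = F b := hxy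
      have hmem := hFIω b
      rw [← h'] at hmem
      exact absurd hmem (hgnIω a)
    · have h' : g a = g b := hxy
      rw [hginj h']
    · have h' : g a = g' b := hxy
      have hmem := hg'Iω b
      rw [← h'] at hmem
      exact absurd hmem (hgnIω a)
    · have h' : g' a = F b := hxy
      have hmem := hFmem b
      rw [← h'] at hmem
      exact absurd (Finset.mem_coe.2 hmem) (hg'nU a)
    · have h' : g' a = g b := hxy
      have hmem := hg'Iω a
      rw [h'] at hmem
      exact absurd hmem (hgnIω b)
    · have h' : g' a = g' b := hxy
      rw [hg'inj h']
  have hFI : ∀ i, F i ∈ I := fun i => hIω (hFIω i)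
  have hg'I : ∀ i, g' i ∈ I := fun i => hIω (hg'Iω i)
  -- the new parameter set
  set A' : Set N := A ∪ (⋃ z : Fin u ⊕ Fin t, Set.range (Sum.elim F g' z)) with hA'
  have hcoordA' : ∀ (z : Fin u ⊕ Fin t) (c : Fin k), Sum.elim F g' z c ∈ A' :=
    fun z c => Set.mem_union_right _ (Set.mem_iUnion.2 ⟨z, Set.mem_range_self c⟩)
  have hA'S : A' ⊆ {x : N | InAcl (L := L) (coords I) x} := by
    intro x hx
    rcases hx with hx | hx
    · exact hAS hx
    · obtain ⟨z, c, rfl⟩ := Set.mem_iUnion.1 hx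
      rcases z with z | z
      · exact coords_mem_acl (mem_coords (hFI z) _)
      · exact coords_mem_acl (mem_coords (hg'I z) _)
  have hA'fin : A'.Finite :=
    hAfin.union (Set.finite_iUnion fun z => Set.finite_range _)
  have hA'card : #↥A' < ℵ₁ := hA'fin.lt_aleph0.trans Cardinal.aleph0_lt_aleph_one
  -- the new type
  set ι : ↥A ⊕ Fin 1 → ↥A' ⊕ Fin 1 :=
    Sum.map (Set.inclusion Set.subset_union_left) (id : Fin 1 → Fin 1) with hι
  set Ψ' : L.Formula (↥A' ⊕ Fin 1) :=
    ψ.relabel (Sum.map (fun pz : (Fin u ⊕ Fin t) × Fin k =>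
      (⟨Sum.elim F g' pz.1 pz.2, hcoordA' pz.1 pz.2⟩ : ↥A')) (id : Fin 1 → Fin 1)) with hΨ'
  set q' : Set (L.Formula (↥A' ⊕ Fin 1)) := ((fun φp => φp.relabel ι) '' p) ∪ {Ψ'} with hq'
  have hconv1 : ∀ (φp : L.Formula (↥A ⊕ Fin 1)) (x : Fin 1 → N),
      (φp.relabel ι).Realize (Sum.elim (fun c : ↥A' => (c : N)) x) ↔
        φp.Realize (Sum.elim (fun c : ↥A => (c : N)) x) := by
    intro φp x
    rw [Formula.realize_relabel]
    have : (Sum.elim (fun c : ↥A' => (c : N)) x ∘ ι) =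
        Sum.elim (fun c : ↥A => (c : N)) x := by
      funext a
      rcases a with a | a <;> rfl
    rw [this]
  have hconv2 : ∀ x : Fin 1 → N,
      Ψ'.Realize (Sum.elim (fun c : ↥A' => (c : N)) x) ↔
        ψ.Realize (Sum.elim (vAt (Sum.elim F g')) x) := by
    intro x
    rw [hΨ', Formula.realize_relabel]
    have : (Sum.elim (fun c : ↥A' => (c : N)) x ∘
        Sum.map (fun pz : (Fin u ⊕ Fin t) × Fin k =>
          (⟨Sum.elim F g' pz.1 pz.2, hcoordA' pz.1 pz.2⟩ : ↥A')) (id : Fin 1 → Fin 1)) =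
        Sum.elim (vAt (Sum.elim F g')) x := by
      funext a
      rcases a with a | a <;> rfl
    rw [this]
  -- the variable bookkeeping for the transferred formula
  set ρ : ↥A ⊕ Fin 1 → (Fin s ⊕ ((Fin u ⊕ Fin t) × Fin k)) ⊕ Fin 1 :=
    Sum.map (fun c => Sum.inl (aidx c)) (id : Fin 1 → Fin 1) with hρ
  set τ : ((Fin u ⊕ Fin t) × Fin k) ⊕ Fin 1 → (Fin s ⊕ ((Fin u ⊕ Fin t) × Fin k)) ⊕ Fin 1 :=
    Sum.map Sum.inr (id : Fin 1 → Fin 1) with hτ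
  -- key: transfer a finite chunk of p plus the algebraicity formula
  have hkey : ∀ S₀ : Finset (L.Formula (↥A ⊕ Fin 1)), ↑S₀ ⊆ p →
      ∃ x : Fin 1 → N, (∀ φp ∈ S₀, φp.Realize (Sum.elim (fun c : ↥A => (c : N)) x)) ∧
        ψ.Realize (Sum.elim (vAt (Sum.elim F g')) x) := by
    intro S₀ hS₀p
    set Φσ : L.Formula ((Fin s ⊕ ((Fin u ⊕ Fin t) × Fin k)) ⊕ Fin 1) :=
      (BoundedFormula.iInf fun φp : ↥S₀ => φp.1.relabel ρ) ⊓ (ψ.relabel τ) with hΦσ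
    set σ : L.Formula (Fin s ⊕ ((Fin u ⊕ Fin t) × Fin k)) :=
      Formula.iExs (Fin 1) Φσ with hσ
    have hσsem : ∀ d : Fin t → Fin k → N,
        σ.Realize (Sum.elim as (vAt (Sum.elim F d))) ↔
          ∃ x : Fin 1 → N, (∀ φp ∈ S₀, φp.Realize (Sum.elim (fun c : ↥A => (c : N)) x)) ∧
            ψ.Realize (Sum.elim (vAt (Sum.elim F d)) x) := by
      intro d
      rw [hσ, Formula.realize_iExs]
      refine exists_congr fun x => ?_
      have hval : (fun a => Sum.elim (Sum.elim as (vAt (Sum.elim F d))) x (id a)) =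
          Sum.elim (Sum.elim as (vAt (Sum.elim F d))) x := by
        funext a
        rcases a with a | a <;> rfl
      rw [hΦσ, Formula.realize_inf]
      have h1 : (BoundedFormula.iInf fun φp : ↥S₀ =>
          (φp.1.relabel ρ : L.Formula ((Fin s ⊕ ((Fin u ⊕ Fin t) × Fin k)) ⊕ Fin 1))).Realize
            (Sum.elim (Sum.elim as (vAt (Sum.elim F d))) x) (default : Fin 0 → N) ↔
          ∀ φp ∈ S₀, φp.Realize (Sum.elim (fun c : ↥A => (c : N)) x) := by
        rw [BoundedFormula.realize_iInf]
        have he : ∀ φp : L.Formula (↥A ⊕ Fin 1),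
            ((Sum.elim (Sum.elim as (vAt (Sum.elim F d))) x ∘ ρ)) =
              Sum.elim (fun c : ↥A => (c : N)) x := by
          intro φp
          funext a
          rcases a with c | a
          · show as (aidx c) = (c : N)
            exact haidx_eq c
          · rfl
        refine ⟨fun h φp hφp => ?_, fun h φp => ?_⟩
        · have hh := h ⟨φp, hφp⟩
          revert hh
          show Formula.Realize _ _ → _
          rw [Formula.realize_relabel, he φp]
          exact _root_.id
        · show Formula.Realize _ _
          rw [Formula.realize_relabel, he φp.1]
          exact h φp.1 φp.2
      have h2 : (ψ.relabel τ : L.Formula ((Fin s ⊕ ((Fin u ⊕ Fin t) × Fin k)) ⊕ Fin 1)).Realize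
          (Sum.elim (Sum.elim as (vAt (Sum.elim F d))) x) ↔
            ψ.Realize (Sum.elim (vAt (Sum.elim F d)) x) := by
        rw [Formula.realize_relabel]
        have he : (Sum.elim (Sum.elim as (vAt (Sum.elim F d))) x ∘ τ) =
            Sum.elim (vAt (Sum.elim F d)) x := by
          funext a
          rcases a with a | a <;> rfl
        rw [he]
      rw [h2]
      constructor
      · rintro ⟨hA1, hA2⟩
        exact ⟨h1.1 hA1, hA2⟩
      · rintro ⟨hA1, hA2⟩
        exact ⟨h1.2 hA1, hA2⟩
    have hσg : σ.Realize (Sum.elim as (vAt (Sum.elim F g))) := by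
      rw [hσsem g]
      refine ⟨bb, fun φp hφp => hbp φp (hS₀p hφp), ?_⟩
      have : Sum.elim (vAt (Sum.elim F g)) bb =
          Sum.elim (vAt (Sum.elim F g)) (fun _ => bb 0) := by
        funext a
        rcases a with a | a
        · rfl
        · show bb a = bb 0
          rw [Subsingleton.elim a 0]
      rw [this]
      exact hψre
    have hσg' : σ.Realize (Sum.elim as (vAt (Sum.elim F g'))) :=
      (transfer hind hIinf F g g' hinj hFI hgI hg'I as χ hχre hχfin σ).1 hσg
    exact (hσsem g').1 hσg'
  -- the bound formula also transfers
  have hbound' : (atMost (L := L) r ψ).Realize (vAt (Sum.elim F g')) := by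
    have h0 := (transfer hind hIinf F g g' hinj hFI hgI hg'I as χ hχre hχfin
      ((atMost (L := L) r ψ).relabel Sum.inr)).1 (by
        rw [Formula.realize_relabel]
        have : (Sum.elim as (vAt (Sum.elim F g)) ∘ Sum.inr) = vAt (Sum.elim F g) := by
          funext a; rfl
        rw [this]
        exact hbound)
    rw [Formula.realize_relabel] at h0
    have : (Sum.elim as (vAt (Sum.elim F g')) ∘ Sum.inr) = vAt (Sum.elim F g') := by
      funext a; rfl
    rwa [this] at h0
  -- q' is finitely satisfiable
  have hq'fin : ∀ Sf : Finset (L.Formula (↥A' ⊕ Fin 1)), ↑Sf ⊆ q' →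
      ∃ a : Fin 1 → N, ∀ φ ∈ Sf, φ.Realize (Sum.elim (fun c : ↥A' => (c : N)) a) := by
    intro Sf hSf
    set S₀ : Finset (L.Formula (↥A ⊕ Fin 1)) := Sf.attach.biUnion (fun ξ =>
      if h : ∃ φp ∈ p, ξ.1 = φp.relabel ι then {h.choose} else ∅) with hS₀
    have hS₀p : ↑S₀ ⊆ p := by
      intro φp hφp
      rw [hS₀] at hφp
      obtain ⟨ξ, _, hmem⟩ := Finset.mem_biUnion.1 hφp
      by_cases h : ∃ φq ∈ p, ξ.1 = φq.relabel ι
      · rw [dif_pos h, Finset.mem_singleton] at hmem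
        rw [hmem]
        exact h.choose_spec.1
      · rw [dif_neg h] at hmem
        exact absurd hmem (Finset.notMem_empty _)
    obtain ⟨x, hx1, hx2⟩ := hkey S₀ hS₀p
    refine ⟨x, fun ξ hξ => ?_⟩
    rcases hSf hξ with hmem | hmem
    · obtain ⟨φp, hφpp, rfl⟩ := hmem
      have hex : ∃ φq ∈ p, φp.relabel ι = φq.relabel ι := ⟨φp, hφpp, rfl⟩
      have hchoose_mem : hex.choose ∈ S₀ := by
        rw [hS₀]
        refine Finset.mem_biUnion.2 ⟨⟨φp.relabel ι, hξ⟩, Finset.mem_attach _ _, ?_⟩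
        rw [dif_pos hex]
        exact Finset.mem_singleton_self _
      have heq : φp.relabel ι = hex.choose.relabel ι := hex.choose_spec.2
      show (φp.relabel ι).Realize (Sum.elim (fun c : ↥A' => (c : N)) x)
      rw [heq, hconv1]
      exact hx1 _ hchoose_mem
    · rw [Set.mem_singleton_iff.1 hmem, hconv2]
      exact hx2
  -- realize q' in acl(I)
  obtain ⟨b', hb'S, hb'q⟩ := hMsat A' hA'S hA'card q' hq'fin
  refine ⟨b', ?_, ?_⟩
  · -- b' 0 is algebraic over Iω
    have hΨ'real := hb'q Ψ' (Set.mem_union_right _ rfl)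
    rw [hconv2] at hΨ'real
    have halg : AlgOver (L := L) (Sum.elim F g') (b' 0) := by
      refine ⟨ψ, ?_, finite_of_atMost hbound'⟩
      have : Sum.elim (vAt (Sum.elim F g')) (fun _ => b' 0) =
          Sum.elim (vAt (Sum.elim F g')) b' := by
        funext a
        rcases a with a | a
        · rfl
        · show b' 0 = b' a
          rw [Subsingleton.elim a 0]
      rw [this]
      exact hΨ'real
    refine acl_of_algOver (J := Iω) (fun z => ?_) halg
    rcases z with z | z
    · exact hFIω z
    · exact hg'Iω z
  · intro φ hφ
    have := hb'q (φ.relabel ι) (Set.mem_union_left _ ⟨φ, hφ, rfl⟩)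
    rw [hconv1] at this
    exact this

end Main

end Help

open Paper in
/-- if the saturated model `acl(I)` witnesses almost indiscernibility, then for a
countably infinite `I_ω ⊆ I`, `M_ω = acl(I_ω)` is an ω-saturated elementary substructure. -/
theorem stmt_7 {L : FirstOrder.Language.{u, v}} (hL : L.card ≤ ℵ₀)
    (N : Type w) [L.Structure N] (k : ℕ) (I : Set (Fin k → N))
    (hind : IsIndiscSet (L := L) I) (hcard : #I = ℵ₁)
    (hMelem : IsElemSubset (L := L) {x : N | InAcl (L := L) (coords I) x})
    (hMsat : SatInside (L := L) {x : N | InAcl (L := L) (coords I) x} ℵ₁)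
    (Iω : Set (Fin k → N)) (hIω : Iω ⊆ I) (hc : Iω.Countable) (hi : Iω.Infinite) :
    IsElemSubset (L := L) {x : N | InAcl (L := L) (coords Iω) x} ∧
    SatInside (L := L) {x : N | InAcl (L := L) (coords Iω) x} ℵ₀ := by
  classical
  have hIinf : I.Infinite := by
    rw [← Set.infinite_coe_iff, Cardinal.infinite_iff, hcard]
    exact Cardinal.aleph0_lt_aleph_one.le
  have hsat := Help.main_sat hind hIinf hMsat Iω hIω hi
  refine ⟨⟨?_, ?_⟩, hsat⟩
  · obtain ⟨e1, he1, e2, he2, hne⟩ := hi.nontrivial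
    have hj : ∃ j : Fin k, e1 j ≠ e2 j := by
      by_contra hcon
      push_neg at hcon
      exact hne (funext hcon)
    obtain ⟨j, -⟩ := hj
    exact ⟨e1 j, Help.coords_mem_acl (Help.mem_coords he1 j)⟩
  · intro n φ a ha hex
    obtain ⟨x0, hx0⟩ := hex
    set A : Set N := Set.range a with hA
    have hAsub : A ⊆ {x : N | InAcl (L := L) (coords Iω) x} := by
      rintro x ⟨i, rfl⟩
      exact ha i
    set ρn : Fin (n + 1) → ↥A ⊕ Fin 1 :=
      Fin.lastCases (Sum.inr 0) (fun i => Sum.inl ⟨a i, Set.mem_range_self i⟩) with hρn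
    have hconv : ∀ x : Fin 1 → N,
        (φ.relabel ρn).Realize (Sum.elim (fun c : ↥A => (c : N)) x) ↔
          φ.Realize (Fin.snoc a (x 0)) := by
      intro x
      rw [Formula.realize_relabel]
      have heval : (Sum.elim (fun c : ↥A => (c : N)) x ∘ ρn) = Fin.snoc a (x 0) := by
        funext i
        refine Fin.lastCases ?_ (fun j => ?_) i
        · simp only [Function.comp_apply, hρn, Fin.lastCases_last, Fin.snoc_last]
          rfl
        · simp only [Function.comp_apply, hρn, Fin.lastCases_castSucc, Fin.snoc_castSucc]
          rfl
      rw [heval]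
    have hfinsat : ∀ Sf : Finset (L.Formula (↥A ⊕ Fin 1)),
        ↑Sf ⊆ ({φ.relabel ρn} : Set (L.Formula (↥A ⊕ Fin 1))) →
        ∃ x : Fin 1 → N, ∀ ξ ∈ Sf, ξ.Realize (Sum.elim (fun c : ↥A => (c : N)) x) := by
      intro Sf hSf
      refine ⟨fun _ => x0, fun ξ hξ => ?_⟩
      rw [Set.mem_singleton_iff.1 (hSf hξ)]
      exact (hconv (fun _ => x0)).2 hx0
    obtain ⟨x, hxmem, hxreal⟩ := hsat A hAsub (Set.finite_range a).lt_aleph0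
      ({φ.relabel ρn} : Set (L.Formula (↥A ⊕ Fin 1))) hfinsat
    refine ⟨x 0, hxmem, ?_⟩
    exact (hconv x).1 (hxreal _ rfl)
end

section
/- In the theory of ℚ-vector spaces with a predicate P naming an infinite linearly independent set, the solution set of P in any model is an indiscernible set. -/
open FirstOrder Language Cardinal Set

universe u v w

open Paper

/-- The language of ℚ-vector spaces (constant `0`, unary scalar multiplications by each `q : ℚ`,
binary `+`) with an extra unary predicate `P`. -/
def L14 : FirstOrder.Language where
  Functions := fun n => match n with | 0 => PUnit | 1 => ℚ | 2 => PUnit | _ => Empty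
  Relations := fun n => match n with | 1 => PUnit | _ => Empty

/-- The zero element. -/
def zero14 {M : Type w} [L14.Structure M] : M :=
  Structure.funMap (L := L14) (M := M) (n := 0) (PUnit.unit : L14.Functions 0) ![]

/-- Scalar multiplication by `q`. -/
def smul14 {M : Type w} [L14.Structure M] (q : ℚ) (x : M) : M :=
  Structure.funMap (L := L14) (M := M) (n := 1) (q : L14.Functions 1) ![x]

/-- Addition. -/
def add14 {M : Type w} [L14.Structure M] (x y : M) : M :=
  Structure.funMap (L := L14) (M := M) (n := 2) (PUnit.unit : L14.Functions 2) ![x, y]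

/-- The predicate `P`. -/
def P14 {M : Type w} [L14.Structure M] (x : M) : Prop :=
  Structure.RelMap (L := L14) (M := M) (n := 1) (PUnit.unit : L14.Relations 1) ![x]

/-- Finite sums. -/
def vsum14 {M : Type w} [L14.Structure M] : ∀ {n : ℕ}, (Fin n → M) → M
  | 0, _ => zero14
  | n + 1, x => add14 (vsum14 fun i : Fin n => x i.castSucc) (x (Fin.last n))

/-- Axioms: a ℚ-vector space in which `P` names an infinite linearly independent set. -/
def Ax14 (M : Type w) [L14.Structure M] : Prop :=
  (∀ x y : M, add14 x y = add14 y x) ∧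
  (∀ x y z : M, add14 (add14 x y) z = add14 x (add14 y z)) ∧
  (∀ x : M, add14 zero14 x = x) ∧
  (∀ (q : ℚ) (x y : M), smul14 q (add14 x y) = add14 (smul14 q x) (smul14 q y)) ∧
  (∀ (q q' : ℚ) (x : M), smul14 (q + q') x = add14 (smul14 q x) (smul14 q' x)) ∧
  (∀ (q q' : ℚ) (x : M), smul14 (q * q') x = smul14 q (smul14 q' x)) ∧
  (∀ x : M, smul14 1 x = x) ∧
  (∀ x : M, smul14 0 x = zero14) ∧
  {x : M | P14 x}.Infinite ∧
  ∀ (n : ℕ) (e : Fin n → M), Function.Injective e → (∀ i, P14 (e i)) →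
    ∀ c : Fin n → ℚ, vsum14 (fun i => smul14 (c i) (e i)) = zero14 → ∀ i, c i = 0

/-- The theory of ℚ-vector spaces with a predicate for an infinite linearly independent set. -/
def T14 : L14.Theory :=
  {φ : L14.Sentence | ∀ (M : Type) (_ : L14.Structure M), Ax14 M → M ⊨ φ}


theorem exists_perm_extend {α : Type*} : ∀ {n : ℕ} (a b : Fin n → α),
    Function.Injective a → Function.Injective b →
    ∃ e : Equiv.Perm α, (∀ i, e (a i) = b i) ∧
      ∀ x, x ∉ Set.range a ∪ Set.range b → e x = x := by
  intro n
  classical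
  induction n with
  | zero =>
    exact fun a b _ _ => ⟨Equiv.refl α, fun i => i.elim0, fun x _ => rfl⟩
  | succ k ih =>
    intro a b ha hb
    obtain ⟨e, he1, he2⟩ := ih (a ∘ Fin.castSucc) (b ∘ Fin.castSucc)
      (ha.comp (Fin.castSucc_injective k)) (hb.comp (Fin.castSucc_injective k))
    refine ⟨e.trans (Equiv.swap (e (a (Fin.last k))) (b (Fin.last k))), ?_, ?_⟩
    · intro i
      refine Fin.lastCases ?_ ?_ i
      · simp [Equiv.swap_apply_left]
      · intro j
        have h1 : e (a j.castSucc) = b j.castSucc := he1 j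
        simp only [Equiv.trans_apply, h1]
        refine Equiv.swap_apply_of_ne_of_ne ?_ ?_
        · rw [← h1]
          intro h
          exact (Fin.castSucc_lt_last j).ne (ha (e.injective h))
        · exact fun h => (Fin.castSucc_lt_last j).ne (hb h)
    · intro x hx
      have hx' : x ∉ Set.range (a ∘ Fin.castSucc) ∪ Set.range (b ∘ Fin.castSucc) := by
        rintro (⟨j, rfl⟩ | ⟨j, rfl⟩)
        · exact hx (Or.inl ⟨j.castSucc, rfl⟩)
        · exact hx (Or.inr ⟨j.castSucc, rfl⟩)
      have hex : e x = x := he2 x hx'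
      simp only [Equiv.trans_apply, hex]
      refine Equiv.swap_apply_of_ne_of_ne ?_ ?_
      · intro h
        have : x = a (Fin.last k) := e.injective (hex.trans h)
        exact hx (Or.inl ⟨_, this.symm⟩)
      · exact fun h => hx (Or.inr ⟨_, h.symm⟩)

/-- in any model, the solution set of `P` is an indiscernible set. -/
theorem stmt_15 (M : Type w) [L14.Structure M] (hM : Ax14 M) :
    ∀ (n : ℕ) (a b : Fin n → M), Function.Injective a → Function.Injective b →
      (∀ i, P14 (a i)) → (∀ i, P14 (b i)) →
      ∀ φ : L14.Formula (Fin n), φ.Realize a ↔ φ.Realize b := by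
  classical
  obtain ⟨hcomm, hassoc, hzadd, hsa, has, hms, h1s, h0s, hPinf, hPind⟩ := hM
  intro n a b ha hb haP hbP φ
  -- additive group structure
  letI : Zero M := ⟨zero14⟩
  letI : Add M := ⟨add14⟩
  letI : Neg M := ⟨fun x => smul14 (-1) x⟩
  letI : AddCommGroup M :=
    { add := add14
      zero := zero14
      neg := fun x => smul14 (-1) x
      add_assoc := hassoc
      zero_add := hzadd
      add_zero := fun x => (hcomm x zero14).trans (hzadd x)
      add_comm := hcomm
      nsmul := nsmulRec
      zsmul := zsmulRec
      neg_add_cancel := fun x => by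
        show add14 (smul14 (-1) x) x = zero14
        have h1 : add14 (smul14 (-1) x) x = add14 (smul14 (-1) x) (smul14 1 x) := by
          rw [h1s]
        have h2 : add14 (smul14 (-1) x) (smul14 1 x) = smul14 ((-1) + 1) x := by
          rw [has, hcomm]
        have h3 : ((-1 : ℚ) + 1) = 0 := by norm_num
        exact h1.trans (h2.trans (by rw [h3]; exact h0s x)) }
  letI : SMul ℚ M := ⟨smul14⟩
  letI : Module ℚ M := Module.ofMinimalAxioms hsa has hms h1s
  -- bridging
  have hvs : ∀ (m : ℕ) (x : Fin m → M), vsum14 x = ∑ i, x i := by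
    intro m
    induction m with
    | zero => intro x; rfl
    | succ k ih =>
      intro x
      rw [Fin.sum_univ_castSucc, ← ih]
      rfl
  -- linear independence of P
  set Pset : Set M := {x : M | P14 x} with hPset
  have hLI : LinearIndependent ℚ ((↑) : Pset → M) := by
    rw [linearIndependent_iff']
    intro s g hg i hi
    set e : Fin s.card → M := fun j => ((s.equivFin.symm j : Pset) : M) with he
    have hei : Function.Injective e :=
      Subtype.val_injective.comp (Subtype.val_injective.comp
        (s.equivFin.symm.injective))
    have heP : ∀ j, P14 (e j) := fun j => ((s.equivFin.symm j : Pset)).2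
    set c : Fin s.card → ℚ := fun j => g (s.equivFin.symm j) with hc
    have hsum : vsum14 (fun j => smul14 (c j) (e j)) = zero14 := by
      rw [hvs]
      have : ∀ j : Fin s.card, smul14 (c j) (e j) = c j • (e j) := fun _ => rfl
      calc (∑ j, smul14 (c j) (e j)) = ∑ j, c j • e j := by simp only [this]
        _ = ∑ i : s, g i • (i : M) := Equiv.sum_comp s.equivFin.symm (fun i : s => g i • (i : M))
        _ = ∑ i ∈ s, g i • (i : M) := Finset.sum_coe_sort s (fun i : Pset => g i • (i : M))
        _ = 0 := hg
    have := hPind s.card e hei heP c hsum (s.equivFin ⟨i, hi⟩)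
    simpa [hc] using this
  -- basis extending P
  have hLI' : LinearIndepOn ℚ id Pset := hLI
  set E : Set M := hLI'.extend (Set.subset_univ Pset) with hE
  have hPE : Pset ⊆ E := hLI'.subset_extend _
  set B : Module.Basis E ℚ M := Module.Basis.extend hLI' with hB
  -- lift a b to E
  set a' : Fin n → E := fun i => ⟨a i, hPE (haP i)⟩ with ha'
  set b' : Fin n → E := fun i => ⟨b i, hPE (hbP i)⟩ with hb'
  have ha'i : Function.Injective a' := fun i j h => ha (congrArg Subtype.val h)
  have hb'i : Function.Injective b' := fun i j h => hb (congrArg Subtype.val h)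
  obtain ⟨τ, hτ1, hτ2⟩ := exists_perm_extend a' b' ha'i hb'i
  set S : Set E := Set.range a' ∪ Set.range b' with hS
  have hSP : ∀ x : E, x ∈ S → P14 (x : M) := by
    rintro x (⟨j, rfl⟩ | ⟨j, rfl⟩)
    · exact haP j
    · exact hbP j
  have hkey : ∀ (σ : Equiv.Perm E), (∀ w ∉ S, σ w = w) → ∀ x ∈ S, σ x ∈ S := by
    intro σ hfix x hx
    by_contra h
    have hfx : σ (σ x) = σ x := hfix _ h
    have hxx : σ x = x := σ.injective hfx
    rw [hxx] at h
    exact h hx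
  have hτ2' : ∀ w ∉ S, τ.symm w = w := by
    intro w hw
    have := hτ2 w hw
    conv_lhs => rw [← this]
    exact τ.symm_apply_apply w
  -- the linear automorphism
  set f : M ≃ₗ[ℚ] M := B.equiv B τ with hf
  have hfE : ∀ (x : M) (hx : x ∈ E), f x = ((τ ⟨x, hx⟩ : E) : M) := by
    intro x hx
    have h1 : x = B ⟨x, hx⟩ := (Module.Basis.extend_apply_self hLI' ⟨x, hx⟩).symm
    conv_lhs => rw [h1]
    rw [Module.Basis.equiv_apply, Module.Basis.extend_apply_self]
  have hfP1 : ∀ x ∈ Pset, f x ∈ Pset := by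
    intro x hx
    rw [hfE x (hPE hx)]
    by_cases h : (⟨x, hPE hx⟩ : E) ∈ S
    · exact hSP _ (hkey τ hτ2 _ h)
    · rw [hτ2 _ h]; exact hx
  have hfP2 : ∀ y ∈ Pset, ∃ x ∈ Pset, f x = y := by
    intro y hy
    refine ⟨(τ.symm ⟨y, hPE hy⟩ : E), ?_, ?_⟩
    · by_cases h : (⟨y, hPE hy⟩ : E) ∈ S
      · exact hSP _ (hkey τ.symm hτ2' _ h)
      · rw [hτ2' _ h]; exact hy
    · rw [hfE _ (τ.symm ⟨y, hPE hy⟩).2]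
      simp
  have hfP : ∀ x : M, P14 (f x) ↔ P14 x := by
    intro x
    constructor
    · intro h
      obtain ⟨x0, hx0, hfx0⟩ := hfP2 (f x) h
      rwa [← f.injective hfx0]
    · exact hfP1 x
  -- compute funMap
  have h0 : ∀ (F : L14.Functions 0) (x : Fin 0 → M),
      Structure.funMap (L := L14) (M := M) F x = (0 : M) := by
    intro F x
    have hx : x = ![] := funext fun i => i.elim0
    rw [hx]
    rfl
  have h1 : ∀ (q : ℚ) (x : Fin 1 → M),
      Structure.funMap (L := L14) (M := M) (n := 1) (q : L14.Functions 1) x = q • (x 0) := by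
    intro q x
    have hx : x = ![x 0] := funext fun i => by fin_cases i <;> rfl
    conv_lhs => rw [hx]
    rfl
  have h2 : ∀ (F : L14.Functions 2) (x : Fin 2 → M),
      Structure.funMap (L := L14) (M := M) F x = x 0 + x 1 := by
    intro F x
    have hx : x = ![x 0, x 1] := funext fun i => by fin_cases i <;> rfl
    conv_lhs => rw [hx]
    rfl
  have hr1 : ∀ (r : L14.Relations 1) (x : Fin 1 → M),
      Structure.RelMap (L := L14) (M := M) r x ↔ P14 (x 0) := by
    intro r x
    have hx : x = ![x 0] := funext fun i => by fin_cases i <;> rfl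
    conv_lhs => rw [hx]
    rfl
  -- the structure automorphism
  set g : M ≃[L14] M :=
    { toEquiv := f.toEquiv
      map_fun' := by
        intro k F x
        match k, F with
        | 0, F =>
          rw [h0, h0]
          exact map_zero f
        | 1, q =>
          rw [h1 (show ℚ from q), h1 (show ℚ from q)]
          exact map_smul f (show ℚ from q) (x 0)
        | 2, F =>
          rw [h2, h2]
          exact map_add f (x 0) (x 1)
        | (k + 3), F => exact F.elim
      map_rel' := by
        intro k r x
        match k, r with
        | 0, r => exact r.elim
        | 1, r =>
          rw [hr1, hr1]
          exact hfP (x 0)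
        | (k + 2), r => exact r.elim } with hg
  have hga : (g : M → M) ∘ a = b := by
    funext i
    show f (a i) = b i
    rw [hfE (a i) (hPE (haP i))]
    have : (⟨a i, hPE (haP i)⟩ : E) = a' i := rfl
    rw [this, hτ1 i]
  have := StrongHomClass.realize_formula (L := L14) g (φ := φ) (v := a)
  rw [hga] at this
  exact this.symm
end
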